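/- arXiv:1705.03335 — 7 statements merged into one kernel-verified Lean document; each statement's English description precedes it below -/
import Mathlib

section
/- Let k ≥ 3 be an integer and ε ∈ (0,1). If F ⊆ ℝ does not contain any (k,ε)-AP, then the Hausdorff dimension of F satisfies dim_H F ≤ 1 + log(1 − 1/k) / log(k·⌈1/(2ε)⌉), where ⌈x⌉ denotes the smallest integer greater than or equal to x. (Note that log(1 − 1/k) < 0, so this bound is strictly less than 1.) -/
/-!
Put `M = ⌈1/(2ε)⌉` and `N = kM`, and cut an interval of length `Nδ` into `N` cells of length `δ`.
For each residue `r < M`, the cells `r, r + M, …, r + (k-1)M` cannot all meet `F`: points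
chosen in them lie within `δ/2 ≤ εMδ` of the exact progression of the cell midpoints, of step
`Mδ`. So at most `(k-1)M` of the `N` cells meet `F`. Iterating, `F ∩ [z, z+1]` is covered by
`((k-1)M)ⁿ` intervals of length `N⁻ⁿ`, which bounds its Hausdorff dimension by
`log ((k-1)M) / log (kM) = 1 + log (1 - 1/k) / log (kM)`, and `F` is a countable union of
such pieces.
-/

/-- `b 0, …, b (k-1)` is a `(k, ε)`-AP: there exist `a ∈ ℝ` and `Δ > 0` such that
`|b i - (a + i Δ)| ≤ ε Δ` for every `i < k`. -/
def IsKAP (k : ℕ) (ε : ℝ) (b : ℕ → ℝ) : Prop :=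
  ∃ a Δ : ℝ, 0 < Δ ∧ ∀ i < k, |b i - (a + i * Δ)| ≤ ε * Δ

/-- A set `F ⊆ ℝ` contains a `(k, ε)`-AP if there are points `b 0, …, b (k-1)` of `F`
forming a `(k, ε)`-AP. -/
def ContainsKAP (F : Set ℝ) (k : ℕ) (ε : ℝ) : Prop :=
  ∃ b : ℕ → ℝ, (∀ i < k, b i ∈ F) ∧ IsKAP k ε b

open Set Filter Topology MeasureTheory
open scoped ENNReal

theorem dimH_le_logb_of_forall_finset_cover {X : Type*} [EMetricSpace X] {s : Set X}
    {N : ℝ} {K : ℕ} (hN : 1 < N) (hK : 0 < K)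
    (h : ∀ n : ℕ, ∃ t : Finset (Set X), t.card ≤ K ^ n ∧
      (∀ u ∈ t, Metric.ediam u ≤ ENNReal.ofReal (N ^ n)⁻¹) ∧ s ⊆ ⋃₀ t) :
    dimH s ≤ ENNReal.ofReal (Real.logb N K) := by
  borelize X
  set d := Real.logb N K
  have hd : 0 ≤ d := Real.logb_nonneg hN (by exact_mod_cast hK)
  have hscale : ∀ n : ℕ, ENNReal.ofReal (N ^ n)⁻¹ ^ d = ((K : ℝ≥0∞) ^ n)⁻¹ := by
    intro n
    rw [ENNReal.ofReal_rpow_of_nonneg (by positivity) hd, Real.inv_rpow (by positivity),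
      ← Real.rpow_natCast, ← Real.rpow_mul (by positivity), mul_comm, Real.rpow_mul (by positivity),
      Real.rpow_logb (by positivity) hN.ne' (by exact_mod_cast hK), Real.rpow_natCast,
      ENNReal.ofReal_inv_of_pos (by positivity), ENNReal.ofReal_pow (by positivity),
      ENNReal.ofReal_natCast]
  choose t ht_card ht_diam ht_cover using h
  have hsum : ∀ n, ∑ u : t n, Metric.ediam (u : Set X) ^ d ≤ 1 := fun n =>
    calc ∑ u : t n, Metric.ediam (u : Set X) ^ d
        ≤ ∑ _u : t n, ((K : ℝ≥0∞) ^ n)⁻¹ := Finset.sum_le_sum fun u _ =>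
          hscale n ▸ ENNReal.rpow_le_rpow (ht_diam n u u.2) hd
      _ = (t n).card * ((K : ℝ≥0∞) ^ n)⁻¹ := by simp
      _ ≤ (K : ℝ≥0∞) ^ n * ((K : ℝ≥0∞) ^ n)⁻¹ := by gcongr; exact_mod_cast ht_card n
      _ = 1 := ENNReal.mul_inv_cancel (by positivity) (by simp)
  have hr : Tendsto (fun n : ℕ => ENNReal.ofReal (N ^ n)⁻¹) atTop (𝓝 0) := by
    simpa using ENNReal.tendsto_ofReal
      (tendsto_inv_atTop_zero.comp (tendsto_pow_atTop_atTop_of_one_lt hN))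
  have hμ : μH[d] s ≤ 1 :=
    (Measure.hausdorffMeasure_le_liminf_sum d s _ hr (fun n (u : t n) => (u : Set X))
      (.of_forall fun n u => ht_diam n u u.2)
      (.of_forall fun n x hx => by
        obtain ⟨u, hu, hxu⟩ := ht_cover n hx
        exact mem_iUnion.2 ⟨⟨u, hu⟩, hxu⟩)).trans
      (liminf_le_of_frequently_le' (.of_forall hsum))
  exact dimH_le_of_hausdorffMeasure_ne_top (d := d.toNNReal)
    (by rw [Real.coe_toNNReal d hd]; exact (hμ.trans_lt ENNReal.one_lt_top).ne)

theorem exists_finset_cover_Icc_pow {F : Set ℝ} {N : ℝ} {K : ℕ} (hN : 0 < N)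
    (h : ∀ c δ : ℝ, 0 < δ → ∃ t : Finset ℝ, t.card ≤ K ∧
      F ∩ Icc c (c + N * δ) ⊆ ⋃ x ∈ t, Icc x (x + δ))
    (n : ℕ) {δ : ℝ} (hδ : 0 < δ) (c : ℝ) :
    ∃ t : Finset ℝ, t.card ≤ K ^ n ∧ F ∩ Icc c (c + N ^ n * δ) ⊆ ⋃ x ∈ t, Icc x (x + δ) := by
  classical
  induction n generalizing δ with
  | zero => exact ⟨{c}, by simp, by simp [inter_subset_right]⟩
  | succ n ih =>
    obtain ⟨t, ht_card, ht_cover⟩ := ih (mul_pos hN hδ)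
    choose! s hs_card hs_cover using fun x => h x δ hδ
    refine ⟨t.biUnion s, ?_, fun y hy => ?_⟩
    · calc (t.biUnion s).card ≤ ∑ x ∈ t, (s x).card := Finset.card_biUnion_le
        _ ≤ ∑ _x ∈ t, K := Finset.sum_le_sum fun x _ => hs_card x
        _ = t.card * K := by rw [Finset.sum_const, smul_eq_mul]
        _ ≤ K ^ (n + 1) := by rw [pow_succ]; gcongr
    · rw [pow_succ, mul_assoc] at hy
      obtain ⟨x, hx, hyx⟩ := mem_iUnion₂.1 (ht_cover hy)
      obtain ⟨z, hz, hyz⟩ := mem_iUnion₂.1 (hs_cover x ⟨hy.1, hyx⟩)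
      exact mem_iUnion₂.2 ⟨z, Finset.mem_biUnion.2 ⟨x, hx, hz⟩, hyz⟩

theorem Real.dimH_le_logb_of_forall_cover {F : Set ℝ} {N : ℝ} {K : ℕ} (hN : 1 < N) (hK : 0 < K)
    (h : ∀ c δ : ℝ, 0 < δ → ∃ t : Finset ℝ, t.card ≤ K ∧
      F ∩ Icc c (c + N * δ) ⊆ ⋃ x ∈ t, Icc x (x + δ)) :
    dimH F ≤ ENNReal.ofReal (Real.logb N K) := by
  classical
  have hpiece (z : ℤ) : dimH (F ∩ Icc (z : ℝ) (z + 1)) ≤ ENNReal.ofReal (Real.logb N K) := by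
    refine dimH_le_logb_of_forall_finset_cover hN hK fun n => ?_
    obtain ⟨t, ht_card, ht_cover⟩ :=
      exists_finset_cover_Icc_pow (by positivity) h n (inv_pos.2 (pow_pos (by positivity) n)) z
    refine ⟨t.image fun x => Icc x (x + (N ^ n)⁻¹), Finset.card_image_le.trans ht_card, ?_, ?_⟩
    · simp [Real.ediam_Icc]
    · rw [mul_inv_cancel₀ (by positivity)] at ht_cover
      simpa [sUnion_image] using ht_cover
  calc dimH F ≤ dimH (⋃ z : ℤ, F ∩ Icc (z : ℝ) (z + 1)) := dimH_mono fun x hx =>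
        mem_iUnion.2 ⟨⌊x⌋, hx, Int.floor_le x, (Int.lt_floor_add_one x).le⟩
    _ = ⨆ z : ℤ, dimH (F ∩ Icc (z : ℝ) (z + 1)) := dimH_iUnion _
    _ ≤ ENNReal.ofReal (Real.logb N K) := iSup_le hpiece

def gridCell (c δ : ℝ) (j : ℕ) : Set ℝ := Icc (c + j * δ) (c + j * δ + δ)

theorem Icc_subset_biUnion_gridCell {N : ℕ} (hN : 0 < N) {δ : ℝ} (hδ : 0 < δ) (c : ℝ) :
    Icc c (c + N * δ) ⊆ ⋃ j < N, gridCell c δ j := by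
  intro x ⟨hcx, hxN⟩
  set y := (x - c) / δ
  have hy0 : 0 ≤ y := div_nonneg (by linarith) hδ.le
  have hx : y * δ = x - c := div_mul_cancel₀ _ hδ.ne'
  suffices ∃ j < N, (j : ℝ) ≤ y ∧ y ≤ j + 1 by
    obtain ⟨j, hj, hjy, hyj⟩ := this
    exact mem_iUnion₂.2 ⟨j, hj, by constructor <;> nlinarith⟩
  rcases lt_or_ge y N with hyN | hyN
  · exact ⟨⌊y⌋₊, (Nat.floor_lt hy0).2 hyN, Nat.floor_le hy0, (Nat.lt_floor_add_one y).le⟩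
  · refine ⟨N - 1, by omega, ?_, ?_⟩ <;> rw [Nat.cast_pred hN]
    · linarith
    · have : y * δ ≤ N * δ := by linarith
      linarith [le_of_mul_le_mul_right this hδ]

theorem isKAP_of_forall_mem_gridCell {k M r : ℕ} {ε c δ : ℝ} (hMε : 1 ≤ 2 * ε * M) (hδ : 0 < δ)
    {b : ℕ → ℝ} (hb : ∀ i < k, b i ∈ gridCell c δ (r + i * M)) : IsKAP k ε b := by
  have hM : (0 : ℝ) < M := Nat.cast_pos.2 (Nat.pos_of_ne_zero (by rintro rfl; norm_num at hMε))
  refine ⟨c + r * δ + δ / 2, M * δ, by positivity, fun i hi => ?_⟩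
  obtain ⟨hlo, hhi⟩ := hb i hi
  push_cast at hlo hhi
  rw [abs_le]
  constructor <;> nlinarith

theorem card_filter_gridCell_le {F : Set ℝ} {k M : ℕ} {ε : ℝ} (hF : ¬ ContainsKAP F k ε)
    (hMε : 1 ≤ 2 * ε * M) {δ : ℝ} (hδ : 0 < δ) (c : ℝ)
    [DecidablePred fun j => (F ∩ gridCell c δ j).Nonempty] :
    ((Finset.range (k * M)).filter fun j => (F ∩ gridCell c δ j).Nonempty).card ≤ (k - 1) * M := by
  set G := (Finset.range (k * M)).filter fun j => (F ∩ gridCell c δ j).Nonempty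
  have hmiss : ∀ r < M, ∃ i < k, r + i * M ∉ G := by
    intro r hr
    by_contra! h
    have hpts : ∀ i < k, ∃ x, x ∈ F ∩ gridCell c δ (r + i * M) :=
      fun i hi => (Finset.mem_filter.1 (h i hi)).2
    choose! b hb using hpts
    exact hF ⟨b, fun i hi => (hb i hi).1,
      isKAP_of_forall_mem_gridCell hMε hδ fun i hi => (hb i hi).2⟩
  choose! f hf_lt hf_miss using hmiss
  set T := (Finset.range M).image fun r => r + f r * M
  have hT_card : T.card = M := by
    rw [Finset.card_image_of_injOn, Finset.card_range]
    intro r hr s hs hrs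
    simpa [Nat.add_mul_mod_self_right, Nat.mod_eq_of_lt (Finset.mem_range.1 hr),
      Nat.mod_eq_of_lt (Finset.mem_range.1 hs)] using congrArg (· % M) hrs
  have hT_sub : T ⊆ Finset.range (k * M) := by
    simp only [T, Finset.image_subset_iff, Finset.mem_range]
    intro r hr
    have := hf_lt r hr
    nlinarith
  have hG_sub : G ⊆ Finset.range (k * M) \ T := by
    intro j hj
    refine Finset.mem_sdiff.2 ⟨Finset.filter_subset _ _ hj, fun hjT => ?_⟩
    obtain ⟨r, hr, rfl⟩ := Finset.mem_image.1 hjT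
    exact hf_miss r (Finset.mem_range.1 hr) hj
  calc G.card ≤ (Finset.range (k * M) \ T).card := Finset.card_le_card hG_sub
    _ = (k - 1) * M := by
      rw [Finset.card_sdiff_of_subset hT_sub, hT_card, Finset.card_range, Nat.sub_one_mul]

theorem exists_finset_cover_of_not_containsKAP {F : Set ℝ} {k M : ℕ} {ε : ℝ}
    (hF : ¬ ContainsKAP F k ε) (hk : 0 < k) (hMε : 1 ≤ 2 * ε * M) (c δ : ℝ) (hδ : 0 < δ) :
    ∃ t : Finset ℝ, t.card ≤ (k - 1) * M ∧
      F ∩ Icc c (c + (k * M : ℝ) * δ) ⊆ ⋃ x ∈ t, Icc x (x + δ) := by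
  classical
  have hM : 0 < M := Nat.pos_of_ne_zero (by rintro rfl; norm_num at hMε)
  refine ⟨((Finset.range (k * M)).filter fun j => (F ∩ gridCell c δ j).Nonempty).image
    fun j : ℕ => c + j * δ, Finset.card_image_le.trans (card_filter_gridCell_le hF hMε hδ c), ?_⟩
  intro x ⟨hxF, hx⟩
  obtain ⟨j, hj, hxj⟩ := mem_iUnion₂.1
    (Icc_subset_biUnion_gridCell (Nat.mul_pos hk hM) hδ c (by exact_mod_cast hx))
  exact mem_iUnion₂.2 ⟨c + j * δ, Finset.mem_image_of_mem _
    (Finset.mem_filter.2 ⟨Finset.mem_range.2 hj, x, hxF, hxj⟩), hxj⟩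

theorem stmt_0 (k : ℕ) (hk : 3 ≤ k) (ε : ℝ) (hε : ε ∈ Set.Ioo (0 : ℝ) 1)
    (F : Set ℝ) (hF : ¬ ContainsKAP F k ε) :
    dimH F ≤ ENNReal.ofReal
      (1 + Real.log (1 - 1 / k) / Real.log (k * ⌈1 / (2 * ε)⌉₊)) := by
  set M := ⌈1 / (2 * ε)⌉₊
  have hε0 : 0 < ε := hε.1
  have hM : 0 < M := Nat.ceil_pos.2 (by positivity)
  have hMε : 1 ≤ 2 * ε * M := by
    have := (div_le_iff₀ (by positivity)).1 (Nat.le_ceil (1 / (2 * ε)))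
    linarith
  have hkR : (3 : ℝ) ≤ k := by exact_mod_cast hk
  have hMR : (1 : ℝ) ≤ M := by exact_mod_cast hM
  have hN : (1 : ℝ) < k * M := by nlinarith
  have hdim := Real.dimH_le_logb_of_forall_cover hN (Nat.mul_pos (by omega) hM)
    (exists_finset_cover_of_not_containsKAP hF (by omega) hMε)
  have hK : (((k - 1) * M : ℕ) : ℝ) = k * M * (1 - 1 / k) := by
    rw [Nat.cast_mul, Nat.cast_pred (by omega)]
    field_simp
  rwa [hK, Real.logb, Real.log_mul (by positivity)
    (sub_pos.2 ((div_lt_one (by positivity)).2 (by linarith))).ne', add_div,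
    div_self (Real.log_pos hN).ne'] at hdim
end

section
/- Let k ≥ 3 be an integer, ε ∈ (0,1), and set s = 1 + log(1 − 1/k) / log(k·⌈1/(2ε)⌉). If F ⊆ ℝ is nonempty and does not contain any (k,ε)-AP, then for every s' > s there exists a constant C > 0 such that for all 0 < r < R and all x ∈ F, the covering number satisfies N(B(x,R) ∩ F, r) ≤ C·(R/r)^{s'}, where B(x,R) denotes the closed ball (interval) of radius R centred at x. (Equivalently, the Assouad dimension of F is at most s.) -/
/-- `coverN E r` is the smallest number of open sets of diameter at most `r`
needed to cover `E`. -/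
noncomputable def coverN {X : Type*} [PseudoEMetricSpace X] (E : Set X) (r : ℝ) : ℕ :=
  sInf {n : ℕ | ∃ U : Fin n → Set X,
    (∀ i, IsOpen (U i) ∧ EMetric.diam (U i) ≤ ENNReal.ofReal r) ∧ E ⊆ ⋃ i, U i}

/-!
Cut an interval of length `k m δ`, with `m = ⌈1/(2ε)⌉`, into `k m` pieces of length `δ` and group
them by the residue of their index modulo `m`. The `k` pieces of one residue class sit at spacing
`Δ = m δ ≥ δ / (2ε)`, so if they all met `F`, points chosen in them would form a `(k, ε)`-AP. Hence
at most `m (k - 1)` of the `k m` pieces meet `F`. Iterating `n` times, `F` meets an interval of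
length `(k m)ⁿ δ` in a set covered by `(m (k - 1))ⁿ = (k m)^(n s)` intervals of length `δ`, and
choosing `n` with `(k m)ⁿ δ ≈ 2R` and `δ < r` gives the bound on `N(B(x, R) ∩ F, r)`.
-/

open Set Finset

lemma coverN_le_of_subset_iUnion {X ι : Type*} [PseudoEMetricSpace X] [Fintype ι] {E : Set X}
    {r : ℝ} {N : ℕ} (U : ι → Set X)
    (hU : ∀ i, IsOpen (U i) ∧ Metric.ediam (U i) ≤ ENNReal.ofReal r) (hE : E ⊆ ⋃ i, U i)
    (hN : Fintype.card ι ≤ N) : coverN E r ≤ N := by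
  classical
  let e := Fintype.equivFin ι
  refine Nat.sInf_le ⟨fun j => if h : (j : ℕ) < Fintype.card ι then U (e.symm ⟨j, h⟩) else ∅,
    fun j => ?_, fun x hx => ?_⟩
  · dsimp only
    split_ifs
    · exact hU _
    · exact ⟨isOpen_empty, Metric.ediam_empty.trans_le zero_le⟩
  · obtain ⟨i, hi⟩ := mem_iUnion.mp (hE hx)
    refine mem_iUnion.mpr ⟨Fin.castLE hN (e i), ?_⟩
    simpa using hi

def CoverableByIcc (E : Set ℝ) (N : ℕ) (δ : ℝ) : Prop :=
  ∃ S : Finset ℝ, #S ≤ N ∧ E ⊆ ⋃ c ∈ S, Icc c (c + δ)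

namespace CoverableByIcc

variable {E E' : Set ℝ} {N N' : ℕ} {δ : ℝ}

lemma mono (h : CoverableByIcc E N δ) (hE : E' ⊆ E) (hN : N ≤ N') : CoverableByIcc E' N' δ :=
  let ⟨S, hS, hcov⟩ := h
  ⟨S, hS.trans hN, hE.trans hcov⟩

lemma biUnion {ι : Type*} (T : Finset ι) {E : ι → Set ℝ}
    (h : ∀ i ∈ T, CoverableByIcc (E i) N δ) : CoverableByIcc (⋃ i ∈ T, E i) (#T * N) δ := by
  classical
  choose! S hS hcov using h
  refine ⟨T.biUnion S, ?_, ?_⟩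
  · calc #(T.biUnion S) ≤ ∑ i ∈ T, #(S i) := card_biUnion_le
      _ ≤ ∑ _i ∈ T, N := sum_le_sum hS
      _ = #T * N := by rw [sum_const, smul_eq_mul]
  · refine iUnion₂_subset fun i hi => (hcov i hi).trans ?_
    exact biUnion_mono (fun c hc => mem_biUnion.mpr ⟨i, hi, hc⟩) fun _ _ => subset_rfl

lemma coverN_le (h : CoverableByIcc E N δ) {r : ℝ} (hδr : δ < r) : coverN E r ≤ N := by
  obtain ⟨S, hS, hcov⟩ := h
  refine coverN_le_of_subset_iUnion (ι := S)
    (fun c => Ioo (c + δ / 2 - r / 2) (c + δ / 2 + r / 2)) (fun c => ⟨isOpen_Ioo, ?_⟩) ?_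
    (by simpa using hS)
  · exact (Real.ediam_Ioo _ _).trans_le (ENNReal.ofReal_le_ofReal (by linarith))
  · intro x hx
    obtain ⟨c, hc, hxc⟩ := mem_iUnion₂.mp (hcov hx)
    exact mem_iUnion.mpr ⟨⟨c, hc⟩, by constructor <;> linarith [hxc.1, hxc.2]⟩

lemma inter_Icc_pow {F : Set ℝ} {L : ℝ} {P : ℕ} (hL : 0 < L)
    (h : ∀ a δ, 0 < δ → CoverableByIcc (F ∩ Icc a (a + L * δ)) P δ) (n : ℕ) (a : ℝ)
    (hδ : 0 < δ) : CoverableByIcc (F ∩ Icc a (a + L ^ n * δ)) (P ^ n) δ := by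
  induction n generalizing a with
  | zero => exact ⟨{a}, by simp, fun x hx => by simpa using hx.2⟩
  | succ n ih =>
    obtain ⟨S, hS, hcov⟩ := h a (L ^ n * δ) (by positivity)
    refine (biUnion S fun c _ => ih c).mono ?_ (by rw [pow_succ']; gcongr)
    rintro x ⟨hxF, hx⟩
    have hx' : x ∈ F ∩ Icc a (a + L * (L ^ n * δ)) := ⟨hxF, by rwa [← mul_assoc, ← pow_succ']⟩
    obtain ⟨c, hc, hxc⟩ := mem_iUnion₂.mp (hcov hx')
    exact mem_iUnion₂.mpr ⟨c, hc, hxF, hxc⟩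

end CoverableByIcc

lemma exists_lt_mem_Icc_add_mul {a x δ : ℝ} {N : ℕ} (hN : N ≠ 0) (hx : x ∈ Icc a (a + N * δ)) :
    ∃ t < N, x ∈ Icc (a + t * δ) (a + t * δ + δ) := by
  induction N with
  | zero => exact absurd rfl hN
  | succ N ih =>
    rcases Nat.eq_zero_or_pos N with rfl | hN'
    · exact ⟨0, Nat.zero_lt_one, by simpa using hx⟩
    by_cases hxN : x ≤ a + N * δ
    · obtain ⟨t, ht, hxt⟩ := ih hN'.ne' ⟨hx.1, hxN⟩
      exact ⟨t, ht.trans N.lt_succ_self, hxt⟩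
    · refine ⟨N, N.lt_succ_self, (not_le.mp hxN).le, ?_⟩
      have := hx.2
      push_cast at this
      linarith

lemma containsKAP_of_inter_Icc_nonempty {F : Set ℝ} {k : ℕ} {ε a Δ δ : ℝ} (hΔ : 0 < Δ)
    (hδ : δ ≤ 2 * ε * Δ) (h : ∀ i < k, (F ∩ Icc (a + i * Δ) (a + i * Δ + δ)).Nonempty) :
    ContainsKAP F k ε := by
  choose! b hb using h
  refine ⟨b, fun i hi => (hb i hi).1, a + δ / 2, Δ, hΔ, fun i hi => ?_⟩
  obtain ⟨-, hb₁, hb₂⟩ := hb i hi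
  rw [abs_le]
  constructor <;> linarith

lemma coverableByIcc_inter_Icc_of_not_containsKAP {F : Set ℝ} {k m : ℕ} {ε : ℝ}
    (hF : ¬ ContainsKAP F k ε) (hm : 1 ≤ 2 * ε * m) (a : ℝ) {δ : ℝ} (hδ : 0 < δ) :
    CoverableByIcc (F ∩ Icc a (a + k * m * δ)) (m * (k - 1)) δ := by
  classical
  have hk : k ≠ 0 := by
    rintro rfl
    exact hF ⟨fun _ => 0, by simp, 0, 1, one_pos, by simp⟩
  have hm₀ : m ≠ 0 := by
    rintro rfl
    norm_num at hm
  -- `left (i, j)` is the left end of the piece with index `i * m + j`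
  let left : ℕ × ℕ → ℝ := fun p => a + p.1 * (m * δ) + p.2 * δ
  let meets : ℕ × ℕ → Prop := fun p => (F ∩ Icc (left p) (left p + δ)).Nonempty
  have hclass : ∀ j, #{i ∈ range k | meets (i, j)} ≤ k - 1 := by
    intro j
    suffices {i ∈ range k | meets (i, j)} ⊂ range k by
      have := Finset.card_lt_card this
      rw [card_range] at this
      omega
    refine filter_ssubset.mpr ?_
    by_contra! hall
    refine hF (containsKAP_of_inter_Icc_nonempty (a := a + j * δ) (Δ := m * δ)
      (by positivity) (by nlinarith) fun i hi => ?_)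
    simpa only [meets, left, add_right_comm] using hall i (mem_range.mpr hi)
  refine ⟨{p ∈ range k ×ˢ range m | meets p}.image left, ?_, ?_⟩
  · calc #({p ∈ range k ×ˢ range m | meets p}.image left)
        ≤ #{p ∈ range k ×ˢ range m | meets p} := card_image_le
      _ = ∑ j ∈ range m, #{i ∈ range k | meets (i, j)} := by
          simp only [card_filter, sum_product_right]
      _ ≤ ∑ _j ∈ range m, (k - 1) := sum_le_sum fun j _ => hclass j
      _ = m * (k - 1) := by rw [sum_const, card_range, smul_eq_mul]
  · rintro x ⟨hxF, hx⟩
    obtain ⟨i, hi, hxi⟩ := exists_lt_mem_Icc_add_mul (δ := m * δ) hk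
      (by rwa [← mul_assoc])
    obtain ⟨j, hj, hxj⟩ := exists_lt_mem_Icc_add_mul hm₀ (a := a + i * (m * δ)) (δ := δ)
      ⟨hxi.1, by linarith [hxi.2]⟩
    refine mem_iUnion₂.mpr ⟨left (i, j), mem_image_of_mem left ?_, hxj⟩
    exact mem_filter.mpr ⟨mem_product.mpr ⟨mem_range.mpr hi, mem_range.mpr hj⟩, x, hxF, hxj⟩

lemma coverN_closedBall_inter_le {F : Set ℝ} {T s : ℝ} {P : ℕ} (hT : 1 < T) (hs : 0 ≤ s)
    (hP : (P : ℝ) ≤ T ^ s)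
    (h : ∀ (n : ℕ) (a δ : ℝ), 0 < δ → CoverableByIcc (F ∩ Icc a (a + T ^ n * δ)) (P ^ n) δ)
    {r R : ℝ} (hr : 0 < r) (hrR : r < R) (x : ℝ) :
    (coverN (Metric.closedBall x R ∩ F) r : ℝ) ≤ (2 * T) ^ s * (R / r) ^ s := by
  obtain ⟨n, hn, hn₁⟩ := exists_nat_pow_near (x := 2 * R / r)
    (by rw [le_div_iff₀ hr]; linarith) hT
  have hT₀ : 0 < T := by linarith
  have hR : 0 < R := hr.trans hrR
  have hTn : 0 < T ^ (n + 1) := by positivity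
  have hδr : 2 * R / T ^ (n + 1) < r := by
    rw [div_lt_iff₀ hr] at hn₁
    rw [div_lt_iff₀ hTn]
    linarith
  have hball : Metric.closedBall x R ∩ F ⊆
      F ∩ Icc (x - R) (x - R + T ^ (n + 1) * (2 * R / T ^ (n + 1))) := by
    rw [mul_div_cancel₀ _ hTn.ne', Real.closedBall_eq_Icc]
    rintro y ⟨hy, hyF⟩
    exact ⟨hyF, hy.1, by linarith [hy.2]⟩
  have hcover := ((h (n + 1) (x - R) _ (by positivity)).mono hball le_rfl).coverN_le hδr
  calc (coverN (Metric.closedBall x R ∩ F) r : ℝ) ≤ (P : ℝ) ^ (n + 1) := by exact_mod_cast hcover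
    _ ≤ (T ^ s) ^ (n + 1) := by gcongr
    _ = (T ^ n) ^ s * T ^ s := by
        rw [Real.rpow_pow_comm hT₀.le, pow_succ, Real.mul_rpow (by positivity) hT₀.le]
    _ ≤ (2 * R / r) ^ s * T ^ s := by gcongr
    _ = (2 * T) ^ s * (R / r) ^ s := by
        rw [← Real.mul_rpow (by positivity) (by positivity),
          ← Real.mul_rpow (by positivity) (by positivity)]
        ring_nf

lemma Real.rpow_one_add_log_div_log {T q : ℝ} (hT : 0 < T) (hT₁ : T ≠ 1) (hq : 0 < q) :
    T ^ (1 + Real.log q / Real.log T) = T * q := by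
  rw [Real.rpow_add hT, Real.rpow_one, Real.rpow_def_of_pos hT,
    mul_div_cancel₀ _ (Real.log_ne_zero_of_pos_of_ne_one hT hT₁), Real.exp_log hq]

theorem stmt_1_general (k : ℕ) (hk : 3 ≤ k) (ε : ℝ) (hε : ε ∈ Set.Ioo (0 : ℝ) 1)
    (s : ℝ) (hs : s = 1 + Real.log (1 - 1 / k) / Real.log (k * ⌈1 / (2 * ε)⌉₊))
    (F : Set ℝ) (hF : ¬ ContainsKAP F k ε) :
    ∀ s' > s, ∃ C > (0 : ℝ), ∀ r R : ℝ, 0 < r → r < R → ∀ x ∈ F,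
      (coverN (Metric.closedBall x R ∩ F) r : ℝ) ≤ C * (R / r) ^ s' := by
  set m := ⌈1 / (2 * ε)⌉₊
  have hε₀ : 0 < ε := hε.1
  have hmε : 1 ≤ 2 * ε * m := by
    have := Nat.le_ceil (1 / (2 * ε))
    rw [div_le_iff₀ (by positivity)] at this
    linarith
  have hm : 1 ≤ m := Nat.ceil_pos.mpr (by positivity)
  have hk₃ : (3 : ℝ) ≤ k := by exact_mod_cast hk
  have hT : 1 < (k : ℝ) * m := by
    have : (1 : ℝ) ≤ m := by exact_mod_cast hm
    nlinarith
  have hPT : ((m * (k - 1) : ℕ) : ℝ) = ((k : ℝ) * m) ^ s := by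
    have hk₀ : (k : ℝ) ≠ 0 := by positivity
    rw [hs, Real.rpow_one_add_log_div_log (by positivity) hT.ne'
        (by rw [sub_pos, div_lt_one (by positivity)]; linarith),
      Nat.cast_mul, Nat.cast_sub (by omega : 1 ≤ k)]
    field_simp
    push_cast
    ring
  have hs₀ : 0 ≤ s := by
    rw [← Real.rpow_le_rpow_left_iff hT, Real.rpow_zero, ← hPT, Nat.one_le_cast]
    exact Nat.one_le_iff_ne_zero.mpr (mul_ne_zero (by omega) (by omega))
  intro s' hs'
  refine ⟨(2 * (k * m)) ^ s', by positivity, fun r R hr hrR x _ => ?_⟩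
  refine coverN_closedBall_inter_le hT (hs₀.trans hs'.le)
    (hPT.le.trans (Real.rpow_le_rpow_of_exponent_le hT.le hs'.le)) (fun n a δ hδ => ?_) hr hrR x
  exact CoverableByIcc.inter_Icc_pow (by positivity)
    (fun a δ hδ => coverableByIcc_inter_Icc_of_not_containsKAP hF hmε a hδ) n a hδ

theorem stmt_1 (k : ℕ) (hk : 3 ≤ k) (ε : ℝ) (hε : ε ∈ Set.Ioo (0 : ℝ) 1)
    (s : ℝ) (hs : s = 1 + Real.log (1 - 1 / k) / Real.log (k * ⌈1 / (2 * ε)⌉₊))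
    (F : Set ℝ) (hFne : F.Nonempty) (hF : ¬ ContainsKAP F k ε) :
    ∀ s' > s, ∃ C > (0 : ℝ), ∀ r R : ℝ, 0 < r → r < R → ∀ x ∈ F,
      (coverN (Metric.closedBall x R ∩ F) r : ℝ) ≤ C * (R / r) ^ s' :=
  stmt_1_general k hk ε hε s hs F hF
end

section
/- Fix an integer k ≥ 3 and a real ε with 0 < ε < (k−2)/4. Let I ⊆ ℝ be a closed interval of length |I| and let J ⊆ I be an open interval of length |J| satisfying |I|·(1 + 2ε)/(k − 1 − 2ε) < |J| < |I|. If b_0, …, b_{k−1} is a (k,ε)-AP contained in I \ J, then the entire set {b_0, …, b_{k−1}} lies to one side of J: either every b_i is ≤ the left endpoint of J, or every b_i is ≥ the right endpoint of J. -/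
/-!
Consecutive terms of a `(k, ε)`-AP with common difference `Δ` are at most `(1 + 2ε)Δ` apart,
while the whole progression spans at least `(k - 1 - 2ε)Δ`; if it lies in `I` this bounds `Δ`
by `|I| / (k - 1 - 2ε)`. Hence no step of the progression is long enough to jump over `J`, so a
progression avoiding `J` cannot change sides of it.
-/

section Crossing

variable {k : ℕ} {p q : ℝ} {b : ℕ → ℝ}

theorem forall_le_of_sub_succ_lt (hside : ∀ i < k, b i ≤ p ∨ q ≤ b i)
    (hstep : ∀ m, m + 1 < k → b (m + 1) - b m < q - p) (h0 : b 0 ≤ p) :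
    ∀ i < k, b i ≤ p := by
  intro i hi
  induction i with
  | zero => exact h0
  | succ i ih =>
    have hbi := ih (by omega)
    have := hstep i hi
    exact (hside (i + 1) hi).resolve_right fun h ↦ by linarith

theorem forall_le_or_forall_ge_of_abs_sub_succ_lt (hside : ∀ i < k, b i ≤ p ∨ q ≤ b i)
    (hstep : ∀ m, m + 1 < k → |b (m + 1) - b m| < q - p) :
    (∀ i < k, b i ≤ p) ∨ (∀ i < k, q ≤ b i) := by
  rcases Nat.eq_zero_or_pos k with rfl | hk
  · exact Or.inl fun i hi ↦ absurd hi (Nat.not_lt_zero i)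
  rcases hside 0 hk with h0 | h0
  · refine Or.inl (forall_le_of_sub_succ_lt hside (fun m hm ↦ ?_) h0)
    exact (le_abs_self _).trans_lt (hstep m hm)
  · -- the same argument for the reflected sequence `-b` and interval `(-q, -p)`
    refine Or.inr fun i hi ↦ neg_le_neg_iff.mp <|
      forall_le_of_sub_succ_lt (b := -b) (p := -q) (q := -p)
        (fun i hi ↦ (hside i hi).symm.imp neg_le_neg neg_le_neg) (fun m hm ↦ ?_)
        (neg_le_neg h0) i hi
    have := (neg_le_abs _).trans_lt (hstep m hm)
    simp only [Pi.neg_apply]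
    linarith

end Crossing

namespace IsKAP

variable {k : ℕ} {ε : ℝ} {b : ℕ → ℝ}

theorem abs_sub_succ_mul_le (hb : IsKAP k ε b) (hεk : 2 * ε ≤ k - 1) {m : ℕ} (hm : m + 1 < k) :
    |b (m + 1) - b m| * (k - 1 - 2 * ε) ≤ (1 + 2 * ε) * (b (k - 1) - b 0) := by
  obtain ⟨a, Δ, hΔ, hAP⟩ := hb
  have hε : 0 ≤ ε := nonneg_of_mul_nonneg_left ((abs_nonneg _).trans (hAP 0 (by omega))) hΔ
  have hstep : |b (m + 1) - b m| ≤ (1 + 2 * ε) * Δ := by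
    have hm₀ := abs_le.mp (hAP m (by omega))
    have hm₁ := abs_le.mp (hAP (m + 1) hm)
    push_cast at hm₁
    rw [abs_le]
    constructor <;> linarith
  have hspan : (k - 1 - 2 * ε) * Δ ≤ b (k - 1) - b 0 := by
    have h₀ := abs_le.mp (hAP 0 (by omega))
    have hlast := abs_le.mp (hAP (k - 1) (by omega))
    rw [Nat.cast_sub (by omega), Nat.cast_one] at hlast
    simp only [CharP.cast_eq_zero, zero_mul, add_zero] at h₀
    linarith
  calc |b (m + 1) - b m| * (k - 1 - 2 * ε)
      ≤ (1 + 2 * ε) * Δ * (k - 1 - 2 * ε) := by gcongr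
    _ = (1 + 2 * ε) * ((k - 1 - 2 * ε) * Δ) := by ring
    _ ≤ (1 + 2 * ε) * (b (k - 1) - b 0) := by gcongr

end IsKAP

theorem stmt_7_general (k : ℕ) (hk : 3 ≤ k) (ε : ℝ) (hε1 : 0 < ε) (hε2 : ε < ((k : ℝ) - 2) / 4)
    -- `I = [u, u + L]` is a closed interval of length `L`; `J = (p, q)` is an open
    -- interval contained in `I` with `L(1+2ε)/(k-1-2ε) < |J| < L`.
    (u L p q : ℝ)
    (hJlower : L * (1 + 2 * ε) / ((k : ℝ) - 1 - 2 * ε) < q - p)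
    -- `b` is a `(k, ε)`-AP contained in `I \ J`
    (b : ℕ → ℝ) (hb : IsKAP k ε b)
    (hbIJ : ∀ i < k, b i ∈ Set.Icc u (u + L) \ Set.Ioo p q) :
    (∀ i < k, b i ≤ p) ∨ (∀ i < k, q ≤ b i) := by
  have hk' : (3 : ℝ) ≤ k := by exact_mod_cast hk
  have hden : 0 < (k : ℝ) - 1 - 2 * ε := by linarith
  refine forall_le_or_forall_ge_of_abs_sub_succ_lt (fun i hi ↦ ?_) (fun m hm ↦ ?_)
  · have := (hbIJ i hi).2
    rwa [Set.mem_Ioo, not_and_or, not_lt, not_lt] at this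
  · have hfirst := (hbIJ 0 (by omega)).1.1
    have hlast := (hbIJ (k - 1) (by omega)).1.2
    refine lt_of_mul_lt_mul_right ?_ hden.le
    calc |b (m + 1) - b m| * (k - 1 - 2 * ε)
        ≤ (1 + 2 * ε) * (b (k - 1) - b 0) := hb.abs_sub_succ_mul_le (by linarith) hm
      _ ≤ (1 + 2 * ε) * L := by gcongr; linarith
      _ < (q - p) * (k - 1 - 2 * ε) := by rwa [div_lt_iff₀ hden, mul_comm] at hJlower

theorem stmt_7 (k : ℕ) (hk : 3 ≤ k) (ε : ℝ) (hε1 : 0 < ε) (hε2 : ε < ((k : ℝ) - 2) / 4)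
    -- `I = [u, u + L]` is a closed interval of length `L`; `J = (p, q)` is an open
    -- interval contained in `I` with `L(1+2ε)/(k-1-2ε) < |J| < L`.
    (u L p q : ℝ) (hJI : Set.Ioo p q ⊆ Set.Icc u (u + L))
    (hJlower : L * (1 + 2 * ε) / ((k : ℝ) - 1 - 2 * ε) < q - p)
    (hJupper : q - p < L)
    -- `b` is a `(k, ε)`-AP contained in `I \ J`
    (b : ℕ → ℝ) (hb : IsKAP k ε b)
    (hbIJ : ∀ i < k, b i ∈ Set.Icc u (u + L) \ Set.Ioo p q) :
    (∀ i < k, b i ≤ p) ∨ (∀ i < k, q ≤ b i) :=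
  stmt_7_general k hk ε hε1 hε2 u L p q hJlower b hb hbIJ
end

section
/- Fix an integer k ≥ 3 and a real ε with 0 < ε < 1 and ε < (k−2)/4, and fix c with 0 < c < (k − 2 − 4ε)/(2k − 2 − 4ε). Define nested compact sets F_0 = [0,1] and F_{m+1} = c·F_m ∪ (c·F_m + 1 − c) for m ≥ 0, and let F = ⋂_{m≥0} F_m (equivalently, F is the attractor of the iterated function system {x ↦ cx, x ↦ cx + 1 − c}). Then F does not contain any (k,ε)-AP. -/
open Set

def IsKAPWith (k : ℕ) (ε : ℝ) (b : ℕ → ℝ) (a Δ : ℝ) : Prop :=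
  ∀ i < k, |b i - (a + i * Δ)| ≤ ε * Δ

namespace IsKAPWith

variable {k : ℕ} {ε a Δ : ℝ} {b : ℕ → ℝ}

theorem affine (h : IsKAPWith k ε b a Δ) {c : ℝ} (hc : 0 < c) (t : ℝ) :
    IsKAPWith k ε (fun i => c * b i + t) (c * a + t) (c * Δ) := by
  intro i hi
  calc |c * b i + t - (c * a + t + i * (c * Δ))| = c * |b i - (a + i * Δ)| := by
        rw [← abs_of_pos hc, ← abs_mul, abs_of_pos hc]; ring_nf
    _ ≤ c * (ε * Δ) := by gcongr; exact h i hi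
    _ = ε * (c * Δ) := by ring

theorem abs_sub_succ_le (h : IsKAPWith k ε b a Δ) (hΔ : 0 ≤ Δ) {i : ℕ} (hi : i + 1 < k) :
    |b (i + 1) - b i| ≤ (1 + 2 * ε) * Δ := by
  have hi₀ := abs_le.mp (h i (by omega))
  have hi₁ := abs_le.mp (h (i + 1) hi)
  push_cast at hi₁
  rw [abs_le]
  constructor <;> linarith

theorem mul_le_of_mem_Icc (h : IsKAPWith k ε b a Δ) (hk : 0 < k) {u v : ℝ}
    (hb : ∀ i < k, b i ∈ Icc u v) : ((k : ℝ) - 1 - 2 * ε) * Δ ≤ v - u := by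
  have hfirst := abs_le.mp (h 0 hk)
  have hlast := abs_le.mp (h (k - 1) (by omega))
  rw [Nat.cast_sub (by omega), Nat.cast_one] at hlast
  simp only [CharP.cast_eq_zero, zero_mul, add_zero] at hfirst
  linarith [(hb 0 hk).1, (hb (k - 1) (by omega)).2]

end IsKAPWith

theorem forall_le_or_forall_ge_of_abs_sub_succ_le {k : ℕ} {f : ℕ → ℝ} {x y δ : ℝ}
    (hδ : δ < y - x) (hstep : ∀ i, i + 1 < k → |f (i + 1) - f i| ≤ δ)
    (hf : ∀ i < k, f i ≤ x ∨ y ≤ f i) : (∀ i < k, f i ≤ x) ∨ (∀ i < k, y ≤ f i) := by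
  have propagate (P : ℝ → Prop) (h₀ : P (f 0))
      (hsucc : ∀ i, i + 1 < k → P (f i) → P (f (i + 1))) : ∀ i < k, P (f i) := by
    intro i
    induction i with
    | zero => exact fun _ => h₀
    | succ i ih => exact fun hi => hsucc i hi (ih (by omega))
  rcases Nat.eq_zero_or_pos k with rfl | hk
  · exact Or.inl fun i hi => absurd hi (Nat.not_lt_zero i)
  refine (hf 0 hk).imp (propagate (· ≤ x) · fun i hi hfi => ?_)
    (propagate (y ≤ ·) · fun i hi hfi => ?_)
  · have := (abs_le.mp (hstep i hi)).2
    exact (hf (i + 1) hi).resolve_right (by linarith)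
  · have := (abs_le.mp (hstep i hi)).1
    exact (hf (i + 1) hi).resolve_left (by linarith)

section Hutchinson

variable {c x : ℝ} {S : Set ℝ}

def hutchinson (c : ℝ) (S : Set ℝ) : Set ℝ :=
  (fun x => c * x) '' S ∪ (fun x => c * x + 1 - c) '' S

theorem hutchinson_subset_Icc (hc₀ : 0 ≤ c) (hc₁ : c ≤ 1) (hS : S ⊆ Icc 0 1) :
    hutchinson c S ⊆ Icc 0 1 := by
  rintro _ (⟨y, hy, rfl⟩ | ⟨y, hy, rfl⟩) <;> obtain ⟨hy₀, hy₁⟩ := hS hy <;>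
    constructor <;> nlinarith

theorem le_or_le_of_mem_hutchinson (hc : 0 ≤ c) (hS : S ⊆ Icc 0 1) (hx : x ∈ hutchinson c S) :
    x ≤ c ∨ 1 - c ≤ x := by
  rcases hx with ⟨y, hy, rfl⟩ | ⟨y, hy, rfl⟩ <;> obtain ⟨hy₀, hy₁⟩ := hS hy
  · exact Or.inl (by nlinarith)
  · exact Or.inr (by nlinarith)

theorem inv_mul_mem_of_mem_hutchinson (hc : 0 < c) (hS : S ⊆ Icc 0 1)
    (hx : x ∈ hutchinson c S) (hxc : x < 1 - c) : c⁻¹ * x ∈ S := by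
  rcases hx with ⟨y, hy, rfl⟩ | ⟨y, hy, rfl⟩
  · rwa [inv_mul_cancel_left₀ hc.ne']
  · nlinarith [(hS hy).1]

theorem inv_mul_add_mem_of_mem_hutchinson (hc : 0 < c) (hS : S ⊆ Icc 0 1)
    (hx : x ∈ hutchinson c S) (hxc : c < x) : c⁻¹ * x + (1 - c⁻¹) ∈ S := by
  rcases hx with ⟨y, hy, rfl⟩ | ⟨y, hy, rfl⟩
  · nlinarith [(hS hy).2]
  · convert hy using 1
    field_simp
    ring

end Hutchinson

section NoAP

variable {k : ℕ} {ε c : ℝ} {F : ℕ → Set ℝ}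

theorem two_mul_lt_one_of_gap (hε : 0 ≤ ε) (hK : 0 < (k : ℝ) - 1 - 2 * ε)
    (hgap : 1 + 2 * ε < (1 - 2 * c) * ((k : ℝ) - 1 - 2 * ε)) : 2 * c < 1 := by
  nlinarith

theorem mul_le_pow_of_isKAPWith (hk : 0 < k) (hε : 0 ≤ ε) (hK : 0 < (k : ℝ) - 1 - 2 * ε)
    (hc : 0 < c) (hgap : 1 + 2 * ε < (1 - 2 * c) * ((k : ℝ) - 1 - 2 * ε))
    (h0 : F 0 = Icc 0 1) (hsucc : ∀ m, F (m + 1) = hutchinson c (F m)) (m : ℕ) {b : ℕ → ℝ}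
    {a Δ : ℝ} (hΔ : 0 < Δ) (hb : IsKAPWith k ε b a Δ) (hbF : ∀ i < k, b i ∈ F m) :
    ((k : ℝ) - 1 - 2 * ε) * Δ ≤ c ^ m := by
  have hc₁ := two_mul_lt_one_of_gap hε hK hgap
  have hF : ∀ m, F m ⊆ Icc 0 1 := fun m => by
    induction m with
    | zero => exact h0.subset
    | succ m ih => exact hsucc m ▸ hutchinson_subset_Icc hc.le (by linarith) ih
  induction m generalizing b a Δ with
  | zero =>
    rw [pow_zero]
    exact (hb.mul_le_of_mem_Icc hk fun i hi => h0 ▸ hbF i hi).trans_eq (sub_zero 1)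
  | succ m ih =>
    have hbF' : ∀ i < k, b i ∈ hutchinson c (F m) := fun i hi => hsucc m ▸ hbF i hi
    have hspan := hb.mul_le_of_mem_Icc hk fun i hi => hF (m + 1) (hbF i hi)
    have hjump : (1 + 2 * ε) * Δ < 1 - c - c :=
      calc (1 + 2 * ε) * Δ < (1 - 2 * c) * (((k : ℝ) - 1 - 2 * ε) * Δ) := by
            rw [← mul_assoc]; gcongr
        _ ≤ 1 - 2 * c := mul_le_of_le_one_right (by linarith) (by linarith)
        _ = 1 - c - c := by ring
    suffices ((k : ℝ) - 1 - 2 * ε) * (c⁻¹ * Δ) ≤ c ^ m from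
      calc ((k : ℝ) - 1 - 2 * ε) * Δ = ((k : ℝ) - 1 - 2 * ε) * (c⁻¹ * Δ) * c := by field_simp
        _ ≤ c ^ (m + 1) := by rw [pow_succ]; gcongr
    rcases forall_le_or_forall_ge_of_abs_sub_succ_le hjump
      (fun i hi => hb.abs_sub_succ_le hΔ.le hi)
      (fun i hi => le_or_le_of_mem_hutchinson hc.le (hF m) (hbF' i hi)) with hle | hge
    · refine ih (by positivity) (by simpa using hb.affine (inv_pos.mpr hc) 0) fun i hi => ?_
      exact inv_mul_mem_of_mem_hutchinson hc (hF m) (hbF' i hi) (by linarith [hle i hi])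
    · refine ih (by positivity) (hb.affine (inv_pos.mpr hc) (1 - c⁻¹)) fun i hi => ?_
      exact inv_mul_add_mem_of_mem_hutchinson hc (hF m) (hbF' i hi) (by linarith [hge i hi])

theorem not_containsKAP_iInter (hk : 0 < k) (hε : 0 ≤ ε) (hK : 0 < (k : ℝ) - 1 - 2 * ε)
    (hc : 0 < c) (hgap : 1 + 2 * ε < (1 - 2 * c) * ((k : ℝ) - 1 - 2 * ε))
    (h0 : F 0 = Icc 0 1) (hsucc : ∀ m, F (m + 1) = hutchinson c (F m)) :
    ¬ ContainsKAP (⋂ m, F m) k ε := by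
  rintro ⟨b, hbF, a, Δ, hΔ, hb⟩
  have hc₁ : c < 1 := by linarith [two_mul_lt_one_of_gap hε hK hgap]
  obtain ⟨m, hm⟩ := exists_pow_lt_of_lt_one (mul_pos hK hΔ) hc₁
  exact (mul_le_pow_of_isKAPWith hk hε hK hc hgap h0 hsucc m hΔ hb
    fun i hi => mem_iInter.mp (hbF i hi) m).not_gt hm

end NoAP

theorem stmt_9_general (k : ℕ) (hk : 3 ≤ k) (ε : ℝ) (hε1 : 0 < ε)
    (hε3 : ε < ((k : ℝ) - 2) / 4)
    (c : ℝ) (hc1 : 0 < c) (hc2 : c < ((k : ℝ) - 2 - 4 * ε) / (2 * k - 2 - 4 * ε))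
    (Fseq : ℕ → Set ℝ)
    (h0 : Fseq 0 = Set.Icc (0 : ℝ) 1)
    (hsucc : ∀ m, Fseq (m + 1) =
      (fun x => c * x) '' Fseq m ∪ (fun x => c * x + 1 - c) '' Fseq m) :
    ¬ ContainsKAP (⋂ m, Fseq m) k ε := by
  have hk' : (3 : ℝ) ≤ k := by exact_mod_cast hk
  have hK : 0 < (k : ℝ) - 1 - 2 * ε := by linarith
  rw [lt_div_iff₀ (by linarith)] at hc2
  have hgap : 1 + 2 * ε < (1 - 2 * c) * ((k : ℝ) - 1 - 2 * ε) := by linarith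
  exact not_containsKAP_iInter (by omega) hε1.le hK hc1 hgap h0 hsucc

theorem stmt_9 (k : ℕ) (hk : 3 ≤ k) (ε : ℝ) (hε1 : 0 < ε) (hε2 : ε < 1)
    (hε3 : ε < ((k : ℝ) - 2) / 4)
    (c : ℝ) (hc1 : 0 < c) (hc2 : c < ((k : ℝ) - 2 - 4 * ε) / (2 * k - 2 - 4 * ε))
    (Fseq : ℕ → Set ℝ)
    (h0 : Fseq 0 = Set.Icc (0 : ℝ) 1)
    (hsucc : ∀ m, Fseq (m + 1) =
      (fun x => c * x) '' Fseq m ∪ (fun x => c * x + 1 - c) '' Fseq m) :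
    ¬ ContainsKAP (⋂ m, Fseq m) k ε :=
  stmt_9_general k hk ε hε1 hε3 c hc1 hc2 Fseq h0 hsucc
end

section
/- Let d ≥ 1 and 1 ≤ m ≤ d be integers, let k ≥ 2 be an integer, and let ε ∈ (0, 1/√d). Suppose F ⊆ ℝ^d is such that there exists an orthonormal family e = {e_1, …, e_m} of vectors in ℝ^d for which F does not contain any (k,ε,e)-AP. Then the Hausdorff dimension of F satisfies dim_H F ≤ d + log(1 − 1/k^m) / log(k·⌈√d/(2ε)⌉), where ⌈x⌉ denotes the smallest integer greater than or equal to x. -/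
/-- A set `F ⊆ ℝ^d` contains a `(k, ε, e)`-AP, where `e = (e 1, …, e m)` is a family of
vectors in `ℝ^d`: there exist `t ∈ ℝ^d` and `Δ > 0` such that every point
`t + Δ (x 1 • e 1 + ⋯ + x m • e m)` with `x i ∈ {0, …, k-1}` is within distance `ε Δ`
of some point of `F`. -/
def ContainsKAPd {d m : ℕ} (F : Set (EuclideanSpace ℝ (Fin d)))
    (k : ℕ) (ε : ℝ) (e : Fin m → EuclideanSpace ℝ (Fin d)) : Prop :=
  ∃ (t : EuclideanSpace ℝ (Fin d)) (Δ : ℝ), 0 < Δ ∧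
    ∀ x : Fin m → ℕ, (∀ i, x i < k) →
      ∃ y ∈ F, ‖t + Δ • (∑ i, (x i : ℝ) • e i) - y‖ ≤ ε * Δ

open Set Filter Topology MeasureTheory

/-!
Rotate `e` onto the first `m` coordinate axes. Cut a unit cube into `N^d` subcubes of side
`u = 1/N`, `N = kQ` with `Q = ⌈√d/(2ε)⌉`. Along each of the first `m` axes the subcubes fall into
`Q` residue classes mod `Q`, so they split into `Q^m N^(d-m)` families of `k^m` subcubes whose
centres form a `k`-term AP with step `Qu` in the directions `e`. Since `√d u/2 ≤ εQu`, a point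
of `F` in every cube of a family would give a `(k,ε,e)`-AP, so each family has an empty cube and
at most `M = N^d - Q^m N^(d-m) = N^d (1 - k^(-m))` subcubes meet `F`. Iterating, `F` meets at
most `M^n` cubes of side `N^(-n)`, whence `dim_H F ≤ log M / log N`.
-/

theorem Finset.card_le_card_sub_card_of_forall_exists_notMem {α β : Type*} [Fintype α]
    [Fintype β] [DecidableEq α] (f : α → β) (S : Finset α) (h : ∀ b, ∃ a ∉ S, f a = b) :
    S.card ≤ Fintype.card α - Fintype.card β := by
  choose g hgS hfg using h
  have hg : Function.Injective g := Function.LeftInverse.injective hfg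
  have : Fintype.card β ≤ Sᶜ.card := by
    rw [← Finset.card_univ, ← Finset.card_image_of_injective _ hg]
    exact Finset.card_le_card fun a ha => by
      obtain ⟨b, -, rfl⟩ := Finset.mem_image.1 ha
      exact Finset.mem_compl.2 (hgS b)
  rw [Finset.card_compl] at this
  have := S.card_le_univ
  omega

section Hausdorff

variable {X : Type*} [EMetricSpace X] {E : Set X} {M : ℕ} {N C : ℝ}

theorem sum_ediam_rpow_le {t : Finset (Set X)} {K : ℕ} {ρ s : ℝ} (hcard : t.card ≤ K)
    (hρ : 0 ≤ ρ) (hs : 0 ≤ s) (hdiam : ∀ U ∈ t, Metric.ediam U ≤ ENNReal.ofReal ρ) :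
    ∑ U : t, Metric.ediam (U : Set X) ^ s ≤ ENNReal.ofReal (K * ρ ^ s) :=
  calc ∑ U : t, Metric.ediam (U : Set X) ^ s
      ≤ ∑ _U : t, ENNReal.ofReal ρ ^ s :=
        Finset.sum_le_sum fun U _ => ENNReal.rpow_le_rpow (hdiam U U.2) hs
    _ = t.card * ENNReal.ofReal (ρ ^ s) := by
        rw [Finset.sum_const, nsmul_eq_mul, Finset.card_univ, Fintype.card_coe,
          ENNReal.ofReal_rpow_of_nonneg hρ hs]
    _ ≤ K * ENNReal.ofReal (ρ ^ s) := by gcongr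
    _ = ENNReal.ofReal (K * ρ ^ s) := by
        rw [ENNReal.ofReal_mul (Nat.cast_nonneg K), ENNReal.ofReal_natCast]

theorem hausdorffMeasure_eq_zero_of_forall_exists_finset_cover [MeasurableSpace X] [BorelSpace X]
    (hN : 1 < N) (hC : 0 ≤ C)
    (h : ∀ n : ℕ, ∃ t : Finset (Set X), t.card ≤ M ^ n ∧ E ⊆ ⋃₀ ↑t ∧
      ∀ U ∈ t, Metric.ediam U ≤ ENNReal.ofReal (C / N ^ n))
    {s : ℝ} (hs : 0 < s) (hMs : M < N ^ s) :
    μH[s] E = 0 := by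
  choose t hcard hcover hdiam using h
  have hN₀ : 0 < N := by linarith
  have hradius : Tendsto (fun n : ℕ => C / N ^ n) atTop (𝓝 0) := by
    simpa [div_eq_mul_inv, inv_pow] using
      (tendsto_pow_atTop_nhds_zero_of_lt_one (by positivity) (inv_lt_one_of_one_lt₀ hN)).const_mul C
  have hsum (n : ℕ) : (M ^ n : ℕ) * (C / N ^ n) ^ s = C ^ s * (M / N ^ s) ^ n := by
    rw [Real.div_rpow hC (by positivity), ← Real.rpow_pow_comm hN₀.le]
    push_cast
    rw [div_pow]
    ring
  have hgeom : Tendsto (fun n : ℕ => C ^ s * (M / N ^ s) ^ n) atTop (𝓝 0) := by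
    simpa using (tendsto_pow_atTop_nhds_zero_of_lt_one (by positivity)
      ((div_lt_one (by positivity)).2 hMs)).const_mul (C ^ s)
  refine le_antisymm ?_ bot_le
  calc μH[s] E ≤ liminf (fun n => ∑ U : t n, Metric.ediam (U : Set X) ^ s) atTop :=
        Measure.hausdorffMeasure_le_liminf_sum s E _
          (by simpa using ENNReal.tendsto_ofReal hradius) (fun n (U : t n) => (U : Set X))
          (Eventually.of_forall fun n U => hdiam n U U.2)
          (Eventually.of_forall fun n x hx => by
            obtain ⟨U, hU, hxU⟩ := hcover n hx
            exact mem_iUnion.2 ⟨⟨U, hU⟩, hxU⟩)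
    _ ≤ liminf (fun n : ℕ => ENNReal.ofReal (C ^ s * (M / N ^ s) ^ n)) atTop :=
        liminf_le_liminf <| Eventually.of_forall fun n =>
          (sum_ediam_rpow_le (hcard n) (by positivity) hs.le (hdiam n)).trans_eq (by rw [hsum])
    _ = 0 := by simpa using (ENNReal.tendsto_ofReal hgeom).liminf_eq

theorem dimH_le_of_forall_exists_finset_cover (hM : 0 < M) (hN : 1 < N) (hC : 0 ≤ C)
    (h : ∀ n : ℕ, ∃ t : Finset (Set X), t.card ≤ M ^ n ∧ E ⊆ ⋃₀ ↑t ∧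
      ∀ U ∈ t, Metric.ediam U ≤ ENNReal.ofReal (C / N ^ n)) :
    dimH E ≤ ENNReal.ofReal (Real.log M / Real.log N) := by
  borelize X
  refine dimH_le fun s hs => ?_
  by_contra! hlt
  have hlog : 0 ≤ Real.log M / Real.log N :=
    div_nonneg (Real.log_natCast_nonneg M) (Real.log_nonneg hN.le)
  rw [ENNReal.ofReal_lt_coe_iff hlog] at hlt
  have hMs : (M : ℝ) < N ^ (s : ℝ) := by
    rw [Real.lt_rpow_iff_log_lt (by exact_mod_cast hM) (by linarith),
      ← div_lt_iff₀ (Real.log_pos hN)]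
    exact hlt
  have := hausdorffMeasure_eq_zero_of_forall_exists_finset_cover hN hC h (hlog.trans_lt hlt) hMs
  simp [this] at hs

end Hausdorff

section Cube

variable {ι : Type*}

def cube (a : EuclideanSpace ℝ ι) (r : ℝ) : Set (EuclideanSpace ℝ ι) :=
  {p | ∀ i, p i ∈ Ico (a i) (a i + r)}

theorem cube_subset_iUnion_cube (a : EuclideanSpace ℝ ι) {r : ℝ} (hr : 0 < r) {N : ℕ}
    (hN : 0 < N) :
    cube a r ⊆
      ⋃ v : ι → Fin N, cube (a + (r / N) • WithLp.toLp 2 (fun i => (v i : ℝ))) (r / N) := by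
  intro p hp
  have hu : 0 < r / N := by positivity
  have hv : ∀ i, ⌊(p i - a i) / (r / N)⌋₊ < N := fun i => by
    rw [Nat.floor_lt (div_nonneg (by linarith [(hp i).1]) hu.le), div_lt_iff₀ hu,
      mul_div_cancel₀ _ (by positivity : (N : ℝ) ≠ 0)]
    linarith [(hp i).2]
  refine mem_iUnion.2 ⟨fun i => ⟨_, hv i⟩, fun i => ?_⟩
  have h₀ : 0 ≤ (p i - a i) / (r / N) := div_nonneg (by linarith [(hp i).1]) hu.le
  have h₁ := Nat.floor_le h₀
  have h₂ := Nat.lt_floor_add_one ((p i - a i) / (r / N))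
  rw [le_div_iff₀ hu] at h₁
  rw [div_lt_iff₀ hu] at h₂
  simp only [PiLp.add_apply, PiLp.smul_apply, smul_eq_mul, mem_Ico]
  constructor <;> nlinarith

variable [Fintype ι]

theorem EuclideanSpace.norm_le_sqrt_card_mul {z : EuclideanSpace ℝ ι} {c : ℝ} (hc : 0 ≤ c)
    (h : ∀ i, |z i| ≤ c) : ‖z‖ ≤ √(Fintype.card ι) * c := by
  rw [EuclideanSpace.norm_eq, ← Real.sqrt_sq hc, ← Real.sqrt_mul (Nat.cast_nonneg _)]
  gcongr
  calc ∑ i, ‖z i‖ ^ 2 ≤ ∑ _i : ι, c ^ 2 := by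
        gcongr with i; simpa using h i
    _ = _ := by simp

theorem norm_center_sub_le_of_mem_cube {a p : EuclideanSpace ℝ ι} {r : ℝ} (hr : 0 ≤ r)
    (hp : p ∈ cube a r) :
    ‖a + WithLp.toLp 2 (fun _ => r / 2) - p‖ ≤ √(Fintype.card ι) * (r / 2) := by
  refine EuclideanSpace.norm_le_sqrt_card_mul (by linarith) fun i => ?_
  obtain ⟨h₁, h₂⟩ := hp i
  simp only [PiLp.sub_apply, PiLp.add_apply]
  rw [abs_le]; constructor <;> linarith

theorem ediam_cube_le (a : EuclideanSpace ℝ ι) {r : ℝ} (hr : 0 ≤ r) :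
    Metric.ediam (cube a r) ≤ ENNReal.ofReal (√(Fintype.card ι) * r) := by
  refine Metric.ediam_le fun p hp p' hp' => ?_
  rw [edist_dist, dist_eq_norm]
  refine ENNReal.ofReal_le_ofReal <| EuclideanSpace.norm_le_sqrt_card_mul hr fun i => ?_
  obtain ⟨h₁, h₂⟩ := hp i
  obtain ⟨h₁', h₂'⟩ := hp' i
  simp only [PiLp.sub_apply]
  rw [abs_le]; constructor <;> linarith

theorem exists_cover_inter_cube_pow {G : Set (EuclideanSpace ℝ ι)} {M N : ℕ} (hN : 0 < N)
    (h : ∀ a r, 0 < r → ∃ T : Finset (EuclideanSpace ℝ ι), T.card ≤ M ∧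
      G ∩ cube a r ⊆ ⋃ c ∈ T, cube c (r / N))
    (a : EuclideanSpace ℝ ι) {r : ℝ} (hr : 0 < r) (n : ℕ) :
    ∃ T : Finset (EuclideanSpace ℝ ι), T.card ≤ M ^ n ∧
      G ∩ cube a r ⊆ ⋃ c ∈ T, cube c (r / N ^ n) := by
  classical
  induction n with
  | zero => exact ⟨{a}, by simp, by simp⟩
  | succ n ih =>
    obtain ⟨T, hcard, hcover⟩ := ih
    choose T' hcard' hcover' using fun c => h c (r / N ^ n) (by positivity)
    refine ⟨T.biUnion T', ?_, fun p hp => ?_⟩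
    · rw [pow_succ]
      exact (Finset.card_biUnion_le_card_mul _ _ _ fun c _ => hcard' c).trans
        (Nat.mul_le_mul_right _ hcard)
    · obtain ⟨c, hc, hpc⟩ := mem_iUnion₂.1 (hcover hp)
      obtain ⟨c', hc', hpc'⟩ := mem_iUnion₂.1 (hcover' c ⟨hp.1, hpc⟩)
      rw [pow_succ, ← div_div]
      exact mem_iUnion₂.2 ⟨c', Finset.mem_biUnion.2 ⟨c, hc, hc'⟩, hpc'⟩

theorem dimH_le_of_forall_dimH_inter_cube_le {G : Set (EuclideanSpace ℝ ι)} {D : ENNReal}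
    (h : ∀ a, dimH (G ∩ cube a 1) ≤ D) : dimH G ≤ D := by
  have hcover : G ⊆ ⋃ z : ι → ℤ, G ∩ cube (WithLp.toLp 2 fun i => (z i : ℝ)) 1 := fun p hp =>
    mem_iUnion.2 ⟨fun i => ⌊p i⌋, hp, fun i => ⟨Int.floor_le _, Int.lt_floor_add_one _⟩⟩
  exact (dimH_mono hcover).trans <| (dimH_iUnion _).trans_le <| iSup_le fun z => h _

end Cube

theorem EuclideanSpace.sum_smul_single_castAdd {m n : ℕ} (c : Fin m → ℝ) :
    ∑ j, c j • EuclideanSpace.single (Fin.castAdd n j) (1 : ℝ) =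
      WithLp.toLp 2 (Fin.append c 0) := by
  ext i
  refine Fin.addCases (fun j => ?_) (fun j => ?_) i
  · simp [Pi.single_apply]
  · simp only [WithLp.ofLp_sum, WithLp.ofLp_smul, Finset.sum_apply, Pi.smul_apply,
      Fin.append_right]
    exact Finset.sum_eq_zero fun x _ => by simp [Fin.ext_iff]; omega

theorem toLp_append_finProdFinEquiv {m n k Q : ℕ} (x : Fin m → Fin k) (q : Fin m → Fin Q)
    (w : Fin n → Fin (k * Q)) :
    WithLp.toLp 2 (fun i => (((Fin.append (fun j => finProdFinEquiv (x j, q j)) w :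
      Fin (m + n) → Fin (k * Q)) i : ℕ) : ℝ)) =
      WithLp.toLp 2 (Fin.append (fun j => (q j : ℝ)) fun j => (w j : ℝ)) +
        (Q : ℝ) • ∑ j, (x j : ℝ) • EuclideanSpace.single (Fin.castAdd n j) (1 : ℝ) := by
  rw [EuclideanSpace.sum_smul_single_castAdd]
  ext i
  refine Fin.addCases (fun j => ?_) (fun j => ?_) i
  · simp [finProdFinEquiv_apply_val]
  · simp

theorem containsKAPd_of_forall_inter_cube_nonempty {d m k : ℕ}
    {G : Set (EuclideanSpace ℝ (Fin d))} {e : Fin m → EuclideanSpace ℝ (Fin d)} {ε Δ u : ℝ}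
    (hΔ : 0 < Δ) (hu : 0 ≤ u) (huΔ : √d * u ≤ 2 * ε * Δ) (b : EuclideanSpace ℝ (Fin d))
    (h : ∀ x : Fin m → ℕ, (∀ j, x j < k) →
      (G ∩ cube (b + Δ • ∑ j, (x j : ℝ) • e j) u).Nonempty) :
    ContainsKAPd G k ε e := by
  refine ⟨b + WithLp.toLp 2 (fun _ => u / 2), Δ, hΔ, fun x hx => ?_⟩
  obtain ⟨y, hyG, hy⟩ := h x hx
  refine ⟨y, hyG, ?_⟩
  calc ‖b + WithLp.toLp 2 (fun _ => u / 2) + Δ • ∑ j, (x j : ℝ) • e j - y‖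
      = ‖(b + Δ • ∑ j, (x j : ℝ) • e j) + WithLp.toLp 2 (fun _ => u / 2) - y‖ := by
        abel_nf
    _ ≤ √d * (u / 2) := by simpa using norm_center_sub_le_of_mem_cube hu hy
    _ ≤ ε * Δ := by linarith

theorem exists_not_inter_cube_nonempty_of_not_containsKAPd {m n k Q : ℕ} (hQ : 0 < Q)
    {ε u : ℝ} (hu : 0 < u) (hQε : √(m + n : ℕ) ≤ 2 * ε * Q)
    {G : Set (EuclideanSpace ℝ (Fin (m + n)))}
    (hG : ¬ ContainsKAPd G k ε fun j : Fin m => EuclideanSpace.single (Fin.castAdd n j) (1 : ℝ))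
    (a : EuclideanSpace ℝ (Fin (m + n))) (q : Fin m → Fin Q) (w : Fin n → Fin (k * Q)) :
    ∃ x : Fin m → Fin k, ¬ (G ∩ cube (a + u • WithLp.toLp 2 (fun i =>
      (((Fin.append (fun j => finProdFinEquiv (x j, q j)) w : Fin (m + n) → Fin (k * Q)) i : ℕ) :
        ℝ))) u).Nonempty := by
  by_contra! hfull
  refine hG <| containsKAPd_of_forall_inter_cube_nonempty (Δ := Q * u) (by positivity) hu.le
    (by have := mul_le_mul_of_nonneg_right hQε hu.le; linarith)
    (a + u • WithLp.toLp 2 (Fin.append (fun j => (q j : ℝ)) fun j => (w j : ℝ))) fun x hx => ?_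
  have := hfull fun j => ⟨x j, hx j⟩
  rwa [toLp_append_finProdFinEquiv, smul_add, smul_smul, mul_comm u, ← add_assoc] at this

theorem exists_cover_inter_cube_of_not_containsKAPd {m n k Q : ℕ} (hk : 0 < k) (hQ : 0 < Q)
    {ε : ℝ} (hQε : √(m + n : ℕ) ≤ 2 * ε * Q) {G : Set (EuclideanSpace ℝ (Fin (m + n)))}
    (hG : ¬ ContainsKAPd G k ε fun j : Fin m => EuclideanSpace.single (Fin.castAdd n j) (1 : ℝ))
    (a : EuclideanSpace ℝ (Fin (m + n))) {r : ℝ} (hr : 0 < r) :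
    ∃ T : Finset (EuclideanSpace ℝ (Fin (m + n))),
      T.card ≤ ((k * Q) ^ m - Q ^ m) * (k * Q) ^ n ∧
      G ∩ cube a r ⊆ ⋃ c ∈ T, cube c (r / (k * Q : ℕ)) := by
  classical
  set u := r / (k * Q : ℕ)
  have hu : 0 < u := by positivity
  let corner (v : Fin (m + n) → Fin (k * Q)) := a + u • WithLp.toLp 2 (fun i => (v i : ℝ))
  let S := Finset.univ.filter fun v => (G ∩ cube (corner v) u).Nonempty
  -- Each fibre of `residue` is a `k^m`-grid of subcubes with step `Q` along the first `m` axes.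
  let residue (v : Fin (m + n) → Fin (k * Q)) : (Fin m → Fin Q) × (Fin n → Fin (k * Q)) :=
    (fun j => (finProdFinEquiv.symm (v (Fin.castAdd n j))).2, fun j => v (Fin.natAdd m j))
  have hfibre : ∀ b, ∃ v ∉ S, residue v = b := by
    rintro ⟨q, w⟩
    obtain ⟨x, hx⟩ := exists_not_inter_cube_nonempty_of_not_containsKAPd hQ hu hQε hG a q w
    exact ⟨_, by simpa [S] using hx, by
      simp only [residue, Fin.append_left, Fin.append_right, Equiv.symm_apply_apply]⟩
  refine ⟨S.image corner, ?_, ?_⟩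
  · calc (S.image corner).card ≤ S.card := Finset.card_image_le
      _ ≤ (k * Q) ^ (m + n) - Q ^ m * (k * Q) ^ n := by
        simpa using Finset.card_le_card_sub_card_of_forall_exists_notMem residue S hfibre
      _ = _ := by rw [Nat.sub_mul, pow_add]
  · rintro p ⟨hpG, hpa⟩
    obtain ⟨v, hv⟩ := mem_iUnion.1 (cube_subset_iUnion_cube a hr (N := k * Q) (by positivity) hpa)
    exact mem_iUnion₂.2 ⟨corner v, Finset.mem_image_of_mem _ (by simpa [S] using ⟨p, hpG, hv⟩), hv⟩

theorem dimH_inter_cube_le_of_not_containsKAPd {m n k Q : ℕ} (hm : 0 < m) (hk : 2 ≤ k)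
    (hQ : 0 < Q) {ε : ℝ} (hQε : √(m + n : ℕ) ≤ 2 * ε * Q)
    {G : Set (EuclideanSpace ℝ (Fin (m + n)))}
    (hG : ¬ ContainsKAPd G k ε fun j : Fin m => EuclideanSpace.single (Fin.castAdd n j) (1 : ℝ))
    (a : EuclideanSpace ℝ (Fin (m + n))) :
    dimH (G ∩ cube a 1) ≤ ENNReal.ofReal
      (Real.log (((k * Q) ^ m - Q ^ m) * (k * Q) ^ n : ℕ) / Real.log (k * Q : ℕ)) := by
  classical
  have hN : 1 < k * Q := by nlinarith
  have hM : 0 < ((k * Q) ^ m - Q ^ m) * (k * Q) ^ n := by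
    have : Q ^ m < (k * Q) ^ m := Nat.pow_lt_pow_left (by nlinarith) hm.ne'
    exact Nat.mul_pos (Nat.sub_pos_of_lt this) (by positivity)
  refine dimH_le_of_forall_exists_finset_cover hM (by exact_mod_cast hN)
    (Real.sqrt_nonneg (m + n : ℕ)) fun n' => ?_
  obtain ⟨T, hcard, hcover⟩ := exists_cover_inter_cube_pow (by omega)
    (fun a r hr => exists_cover_inter_cube_of_not_containsKAPd (by omega) hQ hQε hG a hr)
    a one_pos n'
  refine ⟨T.image fun c => cube c (1 / (k * Q : ℕ) ^ n'), Finset.card_image_le.trans hcard,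
    ?_, ?_⟩
  · simpa [sUnion_image] using hcover
  · simp only [Finset.mem_image]
    rintro _ ⟨c, -, rfl⟩
    refine (ediam_cube_le c (by positivity)).trans_eq ?_
    rw [Fintype.card_fin, mul_one_div]

theorem exists_linearIsometryEquiv_apply_eq_single {m n : ℕ}
    {e : Fin m → EuclideanSpace ℝ (Fin (m + n))} (he : Orthonormal ℝ e) :
    ∃ L : EuclideanSpace ℝ (Fin (m + n)) ≃ₗᵢ[ℝ] EuclideanSpace ℝ (Fin (m + n)),
      ∀ j, L (e j) = EuclideanSpace.single (Fin.castAdd n j) 1 := by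
  let v : Fin (m + n) → EuclideanSpace ℝ (Fin (m + n)) := Fin.append e 0
  have hv : Orthonormal ℝ ((range (Fin.castAdd n)).domRestrict v) := by
    have : (range (Fin.castAdd n)).domRestrict v =
        e ∘ (Equiv.ofInjective _ (Fin.castAdd_injective m n)).symm := by
      funext ⟨_, j, rfl⟩
      simp [v, Set.domRestrict]
    rw [this]
    exact he.comp _ (Equiv.injective _)
  obtain ⟨b, hb⟩ := hv.exists_orthonormalBasis_extension_of_card_eq (by simp)
  refine ⟨b.repr, fun j => ?_⟩
  rw [← b.repr_self, hb _ (mem_range_self j)]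
  simp [v]

theorem ContainsKAPd.of_image_linearIsometryEquiv {d m k : ℕ} {F : Set (EuclideanSpace ℝ (Fin d))}
    {ε : ℝ} {e : Fin m → EuclideanSpace ℝ (Fin d)}
    (L : EuclideanSpace ℝ (Fin d) ≃ₗᵢ[ℝ] EuclideanSpace ℝ (Fin d))
    (h : ContainsKAPd (L '' F) k ε (L ∘ e)) : ContainsKAPd F k ε e := by
  obtain ⟨t, Δ, hΔ, hAP⟩ := h
  refine ⟨L.symm t, Δ, hΔ, fun x hx => ?_⟩
  obtain ⟨_, ⟨y, hyF, rfl⟩, hy⟩ := hAP x hx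
  refine ⟨y, hyF, ?_⟩
  rw [← L.norm_map]
  simpa [map_sum] using hy

theorem log_div_log_eq_add_log_one_sub {m n k Q : ℕ} (hm : 0 < m) (hk : 2 ≤ k) (hQ : 0 < Q) :
    Real.log (((k * Q) ^ m - Q ^ m) * (k * Q) ^ n : ℕ) / Real.log (k * Q : ℕ) =
      (m + n : ℕ) + Real.log (1 - 1 / (k : ℝ) ^ m) / Real.log (k * Q) := by
  have hk₀ : (0 : ℝ) < k := by positivity
  have hkQ : 1 < (k * Q : ℝ) := by
    have : (2 : ℝ) ≤ k := by exact_mod_cast hk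
    have : (1 : ℝ) ≤ Q := by exact_mod_cast hQ
    nlinarith
  have hfrac : 0 < 1 - 1 / (k : ℝ) ^ m := by
    rw [sub_pos, div_lt_one (by positivity)]
    exact one_lt_pow₀ (by exact_mod_cast hk) hm.ne'
  have hM : ((((k * Q) ^ m - Q ^ m) * (k * Q) ^ n : ℕ) : ℝ) =
      (k * Q : ℝ) ^ (m + n) * (1 - 1 / (k : ℝ) ^ m) := by
    rw [Nat.cast_mul, Nat.cast_sub (Nat.pow_le_pow_left (Nat.le_mul_of_pos_left Q (by omega)) m)]
    push_cast
    field_simp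
    ring
  rw [hM, Real.log_mul (by positivity) hfrac.ne', Real.log_pow, Nat.cast_mul,
    add_div, mul_div_assoc, div_self (Real.log_pos hkQ).ne', mul_one]

theorem stmt_10_general (d m : ℕ) (hm1 : 1 ≤ m) (hmd : m ≤ d)
    (k : ℕ) (hk : 2 ≤ k) (ε : ℝ) (hε1 : 0 < ε)
    (F : Set (EuclideanSpace ℝ (Fin d)))
    (e : Fin m → EuclideanSpace ℝ (Fin d)) (he : Orthonormal ℝ e)
    (hF : ¬ ContainsKAPd F k ε e) :
    dimH F ≤ ENNReal.ofReal
      ((d : ℝ) + Real.log (1 - 1 / (k : ℝ) ^ m) /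
        Real.log (k * ⌈Real.sqrt d / (2 * ε)⌉₊)) := by
  obtain ⟨n, rfl⟩ := Nat.exists_eq_add_of_le hmd
  obtain ⟨L, hL⟩ := exists_linearIsometryEquiv_apply_eq_single he
  set Q := ⌈√(m + n : ℕ) / (2 * ε)⌉₊
  have hQ : 0 < Q :=
    Nat.ceil_pos.2 <| div_pos (Real.sqrt_pos.2 (by norm_cast; omega)) (by positivity)
  have hQε : √(m + n : ℕ) ≤ 2 * ε * Q := by
    rw [← div_le_iff₀' (by positivity)]; exact Nat.le_ceil _
  have hG : ¬ ContainsKAPd (L '' F) k ε fun j => EuclideanSpace.single (Fin.castAdd n j) 1 :=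
    fun h => hF <| .of_image_linearIsometryEquiv L (by simpa [Function.comp_def, hL] using h)
  rw [← L.isometry.dimH_image, ← log_div_log_eq_add_log_one_sub hm1 hk hQ]
  exact dimH_le_of_forall_dimH_inter_cube_le
    (dimH_inter_cube_le_of_not_containsKAPd hm1 hk hQ hQε hG)

theorem stmt_10 (d m : ℕ) (hd : 1 ≤ d) (hm1 : 1 ≤ m) (hmd : m ≤ d)
    (k : ℕ) (hk : 2 ≤ k) (ε : ℝ) (hε1 : 0 < ε) (hε2 : ε < 1 / Real.sqrt d)
    (F : Set (EuclideanSpace ℝ (Fin d)))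
    (e : Fin m → EuclideanSpace ℝ (Fin d)) (he : Orthonormal ℝ e)
    (hF : ¬ ContainsKAPd F k ε e) :
    dimH F ≤ ENNReal.ofReal
      ((d : ℝ) + Real.log (1 - 1 / (k : ℝ) ^ m) /
        Real.log (k * ⌈Real.sqrt d / (2 * ε)⌉₊)) :=
  stmt_10_general d m hm1 hmd k hk ε hε1 F e he hF
end

section
/- Let d ≥ 1 and 1 ≤ m ≤ d be integers, let k ≥ 2 be an integer, and let ε ∈ (0, 1/√d) be such that √d/(2ε) is a positive integer. Let e = {e_1, …, e_m} be the first m standard basis vectors of ℝ^d, and suppose F ⊆ ℝ^d does not contain any (k,ε,e)-AP. Let Q be a closed axis-parallel cube of side length R > 0, subdivided into the (k√d/(2ε))^d congruent closed subcubes of side length 2εR/(k√d). Then at most (k√d/(2ε))^d · (1 − 1/k^m) of these subcubes intersect F. -/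
/-!
Index the subcubes by `z ∈ {0, …, kn - 1}^d`, where `n = √d/(2ε)`, so the side is `s = R/(kn)`
and every point of a subcube lies within `√d s/2 = ε·(ns)` of its center. Group the subcubes by
the residues modulo `n` of their first `m` index coordinates together with their remaining
coordinates. Within one of these `n^m (kn)^(d-m)` classes, the indices `w + n·x` with
`x ∈ {0, …, k-1}^m` have centers `c_w + ns·∑ xᵢ eᵢ`; if all those subcubes met `F`, their points
in `F` would witness a `(k, ε, e)`-AP with `Δ = ns`. So every class contains a subcube missing
`F`, and at most `(kn)^d - n^m (kn)^(d-m) = (kn)^d (1 - 1/k^m)` subcubes meet `F`.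
-/

open Finset Function

section Geometry

variable {d : ℕ}

lemma EuclideanSpace.norm_le_sqrt_mul_of_forall_abs_le {v : EuclideanSpace ℝ (Fin d)} {r : ℝ}
    (h : ∀ j, |v j| ≤ r) : ‖v‖ ≤ √d * r := by
  rcases Nat.eq_zero_or_pos d with rfl | hd
  · simp [Subsingleton.elim v 0]
  have hr : 0 ≤ r := (abs_nonneg _).trans (h ⟨0, hd⟩)
  calc ‖v‖ = √(∑ j, ‖v j‖ ^ 2) := EuclideanSpace.norm_eq v
    _ ≤ √(∑ _j : Fin d, r ^ 2) := by
      refine Real.sqrt_le_sqrt (sum_le_sum fun j _ => ?_)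
      exact pow_le_pow_left₀ (norm_nonneg _) ((Real.norm_eq_abs _).trans_le (h j)) 2
    _ = √d * r := by simp [Real.sqrt_mul, Real.sqrt_sq hr]

lemma EuclideanSpace.sum_smul_single_eq_toLp_extend {α : Type*} [Fintype α] {ι : α → Fin d}
    (hι : Injective ι) (c : α → ℝ) :
    ∑ i, c i • EuclideanSpace.single (ι i) (1 : ℝ) = WithLp.toLp 2 (extend ι c 0) := by
  ext j
  simp only [WithLp.ofLp_sum, WithLp.ofLp_smul, Finset.sum_apply, Pi.smul_apply, smul_eq_mul,
    PiLp.single_apply, mul_ite, mul_one, mul_zero]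
  by_cases hj : ∃ i, ι i = j
  · obtain ⟨i, rfl⟩ := hj
    rw [hι.extend_apply, sum_eq_single i (fun b _ hb => if_neg fun h => hb (hι h).symm)
      (fun hi => absurd (mem_univ i) hi), if_pos rfl]
  · rw [extend_apply' _ _ _ hj]
    exact sum_eq_zero fun i _ => if_neg fun h => hj ⟨i, h.symm⟩

def gridCube (a : EuclideanSpace ℝ (Fin d)) (s : ℝ) (z : Fin d → ℕ) :
    Set (EuclideanSpace ℝ (Fin d)) :=
  {x | ∀ j, x j ∈ Set.Icc (a j + z j * s) (a j + (z j + 1) * s)}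

noncomputable def gridCubeCenter (a : EuclideanSpace ℝ (Fin d)) (s : ℝ) (z : Fin d → ℕ) :
    EuclideanSpace ℝ (Fin d) :=
  WithLp.toLp 2 fun j => a j + (z j + 1 / 2) * s

lemma norm_gridCubeCenter_sub_le {a y : EuclideanSpace ℝ (Fin d)} {s : ℝ} {z : Fin d → ℕ}
    (hy : y ∈ gridCube a s z) : ‖gridCubeCenter a s z - y‖ ≤ √d * (s / 2) := by
  refine EuclideanSpace.norm_le_sqrt_mul_of_forall_abs_le fun j => ?_
  have hyj := hy j
  simp only [gridCubeCenter, PiLp.sub_apply]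
  rw [abs_le]
  constructor <;> linarith [hyj.1, hyj.2]

lemma gridCubeCenter_add_smul (a : EuclideanSpace ℝ (Fin d)) (s : ℝ) (w v : Fin d → ℕ) (n : ℕ) :
    gridCubeCenter a s w + (n * s) • WithLp.toLp 2 (fun j => (v j : ℝ)) =
      gridCubeCenter a s fun j => w j + n * v j := by
  ext j
  simp [gridCubeCenter]
  ring

lemma containsKAPd_of_forall_gridCube_inter_nonempty {m k n : ℕ} {ε s : ℝ} {ι : Fin m → Fin d}
    (hι : Injective ι) {F : Set (EuclideanSpace ℝ (Fin d))} (hs : 0 < s) (hn : 0 < n)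
    (hε : √d ≤ 2 * ε * n) (a : EuclideanSpace ℝ (Fin d)) (w : Fin d → ℕ)
    (h : ∀ x : Fin m → ℕ, (∀ i, x i < k) →
      (gridCube a s (fun j => w j + n * extend ι x 0 j) ∩ F).Nonempty) :
    ContainsKAPd F k ε fun i => EuclideanSpace.single (ι i) 1 := by
  refine ⟨gridCubeCenter a s w, n * s, by positivity, fun x hx => ?_⟩
  obtain ⟨y, hy, hyF⟩ := h x hx
  refine ⟨y, hyF, ?_⟩
  have hcast : extend ι (fun i => (x i : ℝ)) 0 = fun j => ((extend ι x 0 j : ℕ) : ℝ) := by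
    funext j
    rw [apply_extend (Nat.cast : ℕ → ℝ)]
    congr 1
    funext
    simp
  rw [EuclideanSpace.sum_smul_single_eq_toLp_extend hι, hcast, gridCubeCenter_add_smul]
  calc _ ≤ √d * (s / 2) := norm_gridCubeCenter_sub_le hy
    _ ≤ ε * (n * s) := by nlinarith

end Geometry

section Counting

variable {d : ℕ} (S : Finset (Fin d)) (n : ℕ)

def baseIndex {N : ℕ} (z : Fin d → Fin N) : Fin d → ℕ :=
  fun j => if j ∈ S then z j % n else z j

def baseIndices (N : ℕ) : Finset (Fin d → ℕ) :=
  Fintype.piFinset fun j => if j ∈ S then range n else range N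

lemma card_baseIndices (N : ℕ) : #(baseIndices S n N) = n ^ #S * N ^ (d - #S) := by
  simp [baseIndices, apply_ite, prod_ite, ← compl_eq_univ_sdiff, filter_not, card_compl]

lemma card_filter_add_card_baseIndices_le {N : ℕ} (P : (Fin d → Fin N) → Prop) [DecidablePred P]
    (h : ∀ w ∈ baseIndices S n N, ∃ z, ¬ P z ∧ baseIndex S n z = w) :
    #{z | P z} + n ^ #S * N ^ (d - #S) ≤ N ^ d := by
  have hsurj :
      Set.SurjOn (baseIndex (N := N) S n) ({z | ¬ P z} : Finset _) (baseIndices S n N) := by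
    intro w hw
    obtain ⟨z, hz, hzw⟩ := h w hw
    exact ⟨z, by simpa using hz, hzw⟩
  calc #{z | P z} + n ^ #S * N ^ (d - #S)
      ≤ #{z | P z} + #{z | ¬ P z} := by
        rw [← card_baseIndices]
        exact Nat.add_le_add_left (card_le_card_of_surjOn _ hsurj) _
    _ = N ^ d := by
        rw [card_filter_add_card_filter_not, card_univ, Fintype.card_fun, Fintype.card_fin,
          Fintype.card_fin]

end Counting

section Shift

variable {d m k n : ℕ} {ι : Fin m → Fin d} (w : Fin d → ℕ) (x : Fin m → ℕ)

lemma add_mul_extend_lt (hι : Injective ι) (hw : w ∈ baseIndices (univ.image ι) n (k * n))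
    (hx : ∀ i, x i < k) (j : Fin d) : w j + n * extend ι x 0 j < k * n := by
  have hwj := Fintype.mem_piFinset.mp hw j
  by_cases hj : ∃ i, ι i = j
  · obtain ⟨i, rfl⟩ := hj
    simp only [mem_image_of_mem ι (mem_univ i), if_true, mem_range] at hwj
    rw [hι.extend_apply]
    nlinarith [hx i]
  · simp only [mem_image, mem_univ, true_and, hj, if_false, mem_range] at hwj
    simpa [extend_apply' _ _ _ hj] using hwj

lemma baseIndex_add_mul_extend (hι : Injective ι) (hw : w ∈ baseIndices (univ.image ι) n (k * n))
    (hx : ∀ i, x i < k) :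
    baseIndex (univ.image ι) n
      (fun j => (⟨w j + n * extend ι x 0 j, add_mul_extend_lt w x hι hw hx j⟩ : Fin (k * n))) =
      w := by
  funext j
  have hwj := Fintype.mem_piFinset.mp hw j
  by_cases hj : ∃ i, ι i = j
  · obtain ⟨i, rfl⟩ := hj
    simp only [mem_image_of_mem ι (mem_univ i), if_true, mem_range] at hwj
    simp only [baseIndex, mem_image_of_mem ι (mem_univ i), if_true, hι.extend_apply,
      Nat.add_mul_mod_self_left, Nat.mod_eq_of_lt hwj]
  · simp [baseIndex, hj]

end Shift

lemma exists_gridCube_inter_empty_baseIndex_eq {d m k n : ℕ} {ε s : ℝ} {ι : Fin m → Fin d}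
    (hι : Injective ι) {F : Set (EuclideanSpace ℝ (Fin d))}
    (hF : ¬ ContainsKAPd F k ε fun i => EuclideanSpace.single (ι i) 1) (hs : 0 < s) (hn : 0 < n)
    (hε : √d ≤ 2 * ε * n) (a : EuclideanSpace ℝ (Fin d)) :
    ∀ w ∈ baseIndices (univ.image ι) n (k * n), ∃ z : Fin d → Fin (k * n),
      ¬ (gridCube a s (fun j => z j) ∩ F).Nonempty ∧ baseIndex (univ.image ι) n z = w := by
  intro w hw
  by_contra hcon
  refine hF (containsKAPd_of_forall_gridCube_inter_nonempty hι hs hn hε a w fun x hx => ?_)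
  by_contra hempty
  exact hcon ⟨fun j => ⟨w j + n * extend ι x 0 j, add_mul_extend_lt w x hι hw hx j⟩, hempty,
    baseIndex_add_mul_extend w x hι hw hx⟩

lemma mul_pow_mul_one_sub_one_div_pow {k : ℝ} (hk : k ≠ 0) (n : ℝ) {m d : ℕ} (hmd : m ≤ d) :
    (k * n) ^ d * (1 - 1 / k ^ m) = (k * n) ^ d - n ^ m * (k * n) ^ (d - m) := by
  obtain ⟨l, rfl⟩ := Nat.exists_eq_add_of_le hmd
  rw [Nat.add_sub_cancel_left, pow_add, mul_pow k n m]
  field_simp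

theorem stmt_12_general (d m : ℕ) (hmd : m ≤ d)
    (k : ℕ) (hk : 2 ≤ k) (ε : ℝ) (hε1 : 0 < ε)
    (n : ℕ) (hn : 0 < n) (hεn : Real.sqrt d / (2 * ε) = (n : ℝ))
    -- `e` consists of the first `m` standard basis vectors of `ℝ^d`
    (e : Fin m → EuclideanSpace ℝ (Fin d))
    (he : ∀ i : Fin m, e i = EuclideanSpace.single (Fin.castLE hmd i) (1 : ℝ))
    (F : Set (EuclideanSpace ℝ (Fin d))) (hF : ¬ ContainsKAPd F k ε e)
    -- the cube `Q` of side length `R` with corner `a`, and its subdivision into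
    -- `(k√d/(2ε))^d = (kn)^d` congruent subcubes of side length `2εR/(k√d) = R/(kn)`
    (a : EuclideanSpace ℝ (Fin d)) (R : ℝ) (hR : 0 < R)
    (Sub : (Fin d → Fin (k * n)) → Set (EuclideanSpace ℝ (Fin d)))
    (hSub : ∀ z, Sub z = {x | ∀ j : Fin d,
      x j ∈ Set.Icc (a j + (z j : ℝ) * (2 * ε * R / (k * Real.sqrt d)))
        (a j + ((z j : ℝ) + 1) * (2 * ε * R / (k * Real.sqrt d)))}) :
    (Nat.card {z : Fin d → Fin (k * n) // (Sub z ∩ F).Nonempty} : ℝ) ≤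
      ((k : ℝ) * Real.sqrt d / (2 * ε)) ^ d * (1 - 1 / (k : ℝ) ^ m) := by
  classical
  obtain rfl : e = fun i => EuclideanSpace.single (Fin.castLE hmd i) 1 := funext he
  have hk0 : (0 : ℝ) < k := by exact_mod_cast (by omega : 0 < k)
  have hsqrt : √d = 2 * ε * n := by
    rw [div_eq_iff (by positivity)] at hεn
    linarith
  have hs : 0 < 2 * ε * R / (k * √d) := by
    rw [hsqrt]
    positivity
  obtain rfl : Sub = fun z => gridCube a (2 * ε * R / (k * √d)) fun j => z j := funext hSub
  have hcount := card_filter_add_card_baseIndices_le _ _ _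
    (exists_gridCube_inter_empty_baseIndex_eq (Fin.castLE_injective hmd) hF hs hn hsqrt.le a)
  rw [card_image_of_injective _ (Fin.castLE_injective hmd), card_univ, Fintype.card_fin] at hcount
  have hside : (k : ℝ) * √d / (2 * ε) = k * n := by
    rw [hsqrt]
    field_simp
  rw [Nat.card_eq_fintype_card, Fintype.card_subtype, hside,
    mul_pow_mul_one_sub_one_div_pow hk0.ne' _ hmd]
  have hcount' := (Nat.cast_le (α := ℝ)).mpr hcount
  push_cast at hcount'
  linarith

theorem stmt_12 (d m : ℕ) (hd : 1 ≤ d) (hm1 : 1 ≤ m) (hmd : m ≤ d)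
    (k : ℕ) (hk : 2 ≤ k) (ε : ℝ) (hε1 : 0 < ε) (hε2 : ε < 1 / Real.sqrt d)
    (n : ℕ) (hn : 0 < n) (hεn : Real.sqrt d / (2 * ε) = (n : ℝ))
    -- `e` consists of the first `m` standard basis vectors of `ℝ^d`
    (e : Fin m → EuclideanSpace ℝ (Fin d))
    (he : ∀ i : Fin m, e i = EuclideanSpace.single (Fin.castLE hmd i) (1 : ℝ))
    (F : Set (EuclideanSpace ℝ (Fin d))) (hF : ¬ ContainsKAPd F k ε e)
    -- the cube `Q` of side length `R` with corner `a`, and its subdivision into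
    -- `(k√d/(2ε))^d = (kn)^d` congruent subcubes of side length `2εR/(k√d) = R/(kn)`
    (a : EuclideanSpace ℝ (Fin d)) (R : ℝ) (hR : 0 < R)
    (Sub : (Fin d → Fin (k * n)) → Set (EuclideanSpace ℝ (Fin d)))
    (hSub : ∀ z, Sub z = {x | ∀ j : Fin d,
      x j ∈ Set.Icc (a j + (z j : ℝ) * (2 * ε * R / (k * Real.sqrt d)))
        (a j + ((z j : ℝ) + 1) * (2 * ε * R / (k * Real.sqrt d)))}) :
    (Nat.card {z : Fin d → Fin (k * n) // (Sub z ∩ F).Nonempty} : ℝ) ≤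
      ((k : ℝ) * Real.sqrt d / (2 * ε)) ^ d * (1 - 1 / (k : ℝ) ^ m) :=
  stmt_12_general d m hmd k hk ε hε1 n hn hεn e he F hF a R hR Sub hSub
end

section
/- Fix an integer k ≥ 3 and a real ε with 0 < ε < 1 and ε < (k−2)/4. For each positive integer N, let r_k(ε,N) denote the largest cardinality of a set A ⊆ {1, 2, …, N} which does not contain any (k,ε)-AP. Then limsup_{N→∞} log r_k(ε,N) / log N ≥ log 2 / log((2k − 2 − 4ε)/(k − 2 − 4ε)). -/
/-- `rk k ε N` is the largest cardinality of a subset `A ⊆ {1, …, N}` which does not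
contain any `(k, ε)`-AP. -/
noncomputable def rk (k : ℕ) (ε : ℝ) (N : ℕ) : ℕ :=
  sSup {n : ℕ | ∃ A : Finset ℕ, A.card = n ∧ A ⊆ Finset.Icc 1 N ∧
    ¬ ContainsKAP ((Nat.cast : ℕ → ℝ) '' (A : Set ℕ)) k ε}


/-!
Let `α = k - 2 - 4ε` and `q > (2k - 2 - 4ε)/α`. Choose integers `cₙ ≈ C qⁿ` growing so fast that
`k Tₙ < α cₙ`, where `Tₙ = c₀ + ⋯ + c_{n-1}`, and let `Sₙ ⊆ [0, Tₙ]` be the set of subset sums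
of `c₀, …, c_{n-1}`, so that `Sₙ₊₁ = Sₙ ∪ (Sₙ + cₙ)`. A `(k, ε)`-AP with common difference `Δ`
in `Sₙ₊₁` lying in one half is a translate of one in `Sₙ`. One meeting both halves has a step
`≤ (1 + 2ε)Δ` that bridges the gap `(Tₙ, cₙ)`, and spans at least `(k - 1 - 2ε)Δ` but at most
`Tₙ + cₙ`; together these give `α cₙ ≤ k Tₙ`. Hence `{1, …, Tₙ + 1}` has an AP-free subset of
size `2ⁿ` while `Tₙ + 1 = O(qⁿ)`, so the exponent is at least `log 2 / log q`, and `q` may be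
taken arbitrarily close to `(2k - 2 - 4ε)/α`.
-/

open Filter Finset Real

variable {k : ℕ} {ε : ℝ}

lemma exists_succ_not_iff {p : ℕ → Prop} {i j : ℕ} (hi : i < k) (hj : j < k) (hpi : p i)
    (hpj : ¬ p j) : ∃ l, l + 1 < k ∧ ¬ (p l ↔ p (l + 1)) := by
  by_contra! h
  have hp0 : ∀ m < k, (p m ↔ p 0) := by
    intro m
    induction m with
    | zero => simp
    | succ m ih => exact fun hm => (h m hm).symm.trans (ih (by omega))
  exact hpj ((hp0 j hj).2 ((hp0 i hi).1 hpi))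

lemma IsKAP.sub_const {b : ℕ → ℝ} (hb : IsKAP k ε b) (t : ℝ) :
    IsKAP k ε (fun i => b i - t) := by
  obtain ⟨a, Δ, hΔ, h⟩ := hb
  exact ⟨a - t, Δ, hΔ, fun i hi => by convert h i hi using 2; ring⟩

lemma ContainsKAP.of_image_add {F : Set ℝ} {t : ℝ} (h : ContainsKAP ((· + t) '' F) k ε) :
    ContainsKAP F k ε := by
  obtain ⟨b, hbF, hb⟩ := h
  refine ⟨fun i => b i - t, fun i hi => ?_, hb.sub_const t⟩
  obtain ⟨x, hx, hxb⟩ := hbF i hi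
  simpa [← hxb] using hx

lemma IsKAP.exists_step_le_and_le_span {b : ℕ → ℝ} (hb : IsKAP k ε b) (hk : 1 ≤ k) :
    ∃ Δ > 0, (∀ i, i + 1 < k → |b (i + 1) - b i| ≤ (1 + 2 * ε) * Δ) ∧
      (k - 1 - 2 * ε) * Δ ≤ b (k - 1) - b 0 := by
  obtain ⟨a, Δ, hΔ, h⟩ := hb
  refine ⟨Δ, hΔ, fun i hi => ?_, ?_⟩
  · have h₁ := h (i + 1) hi
    have h₀ := h i (by omega)
    push_cast at h₁
    rw [abs_le] at h₀ h₁ ⊢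
    constructor <;> linarith
  · have h₁ := h (k - 1) (by omega)
    have h₀ := h 0 (by omega)
    rw [Nat.cast_sub hk, Nat.cast_one] at h₁
    rw [abs_le] at h₀ h₁
    push_cast at h₀
    linarith

/-- Some step bridges the gap `(s, t)`, and every step is short compared with the span. -/
lemma IsKAP.mul_sub_le {b : ℕ → ℝ} {s t lo hi : ℝ} (hb : IsKAP k ε b) (hε : 0 ≤ ε)
    (hk : 2 * ε ≤ k - 1) (hst : s < t) (hsplit : ∀ i < k, b i ≤ s ∨ t ≤ b i)
    (hmem : ∀ i < k, b i ∈ Set.Icc lo hi) (hs : ∃ i < k, b i ≤ s) (ht : ∃ i < k, t ≤ b i) :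
    (k - 1 - 2 * ε) * (t - s) ≤ (1 + 2 * ε) * (hi - lo) := by
  obtain ⟨i, hik, his⟩ := hs
  obtain ⟨j, hjk, hjt⟩ := ht
  obtain ⟨Δ, -, hstep, hspan⟩ := hb.exists_step_le_and_le_span (by omega)
  obtain ⟨l, hl, hne⟩ := exists_succ_not_iff (p := fun i => b i ≤ s) hik hjk his
    (not_le.2 (hst.trans_le hjt))
  have hgap : t - s ≤ (1 + 2 * ε) * Δ := by
    refine le_trans ?_ (hstep l hl)
    rcases hsplit l (by omega) with hl₀ | hl₀ <;> rcases hsplit (l + 1) hl with hl₁ | hl₁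
    · exact absurd (iff_of_true hl₀ hl₁) hne
    · exact (by linarith : t - s ≤ b (l + 1) - b l).trans (le_abs_self _)
    · exact (by linarith : t - s ≤ -(b (l + 1) - b l)).trans (neg_le_abs _)
    · exact absurd (iff_of_false (by linarith) (by linarith)) hne
  have hspan' : b (k - 1) - b 0 ≤ hi - lo := by
    linarith [(hmem (k - 1) (by omega)).2, (hmem 0 (by omega)).1]
  calc (k - 1 - 2 * ε) * (t - s) ≤ (k - 1 - 2 * ε) * ((1 + 2 * ε) * Δ) :=
        mul_le_mul_of_nonneg_left hgap (by linarith)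
    _ = (1 + 2 * ε) * ((k - 1 - 2 * ε) * Δ) := by ring
    _ ≤ (1 + 2 * ε) * (hi - lo) :=
        mul_le_mul_of_nonneg_left (hspan.trans hspan') (by linarith)

lemma not_containsKAP_singleton (hε : 0 ≤ ε) (hk : 2 * ε < k - 1) (x : ℝ) :
    ¬ ContainsKAP {x} k ε := by
  rintro ⟨b, hb, hkap⟩
  have hk₁ : 1 ≤ k := by exact_mod_cast (by linarith : (1 : ℝ) ≤ k)
  obtain ⟨Δ, hΔ, -, hspan⟩ := hkap.exists_step_le_and_le_span hk₁
  rw [hb (k - 1) (by omega), hb 0 (by omega), sub_self] at hspan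
  exact hspan.not_gt (mul_pos (by linarith) hΔ)

lemma not_containsKAP_union_image_add {F : Set ℝ} {T c : ℝ} (hε : 0 ≤ ε)
    (hα : 0 < k - 2 - 4 * ε) (hT : 0 ≤ T) (hF : ¬ ContainsKAP F k ε)
    (hFT : F ⊆ Set.Icc 0 T) (hc : k * T < (k - 2 - 4 * ε) * c) :
    ¬ ContainsKAP (F ∪ (· + c) '' F) k ε := by
  rintro ⟨b, hbF, hb⟩
  have hTc : T < c := by nlinarith
  have hsplit : ∀ i < k, (b i ∈ F ∧ b i ≤ T) ∨ (b i - c ∈ F ∧ c ≤ b i) := by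
    intro i hi
    rcases hbF i hi with h | ⟨x, hx, hxb⟩
    · exact Or.inl ⟨h, (hFT h).2⟩
    · rw [← hxb]
      exact Or.inr ⟨by simpa using hx, by linarith [(hFT hx).1]⟩
  by_cases hhigh : ∃ i < k, c ≤ b i
  · by_cases hlow : ∃ i < k, b i ≤ T
    · have hmem : ∀ i < k, b i ∈ Set.Icc 0 (T + c) := by
        intro i hi
        rcases hsplit i hi with ⟨h, -⟩ | ⟨h, -⟩
        · exact ⟨(hFT h).1, by linarith [(hFT h).2]⟩
        · exact ⟨by linarith [(hFT h).1], by linarith [(hFT h).2]⟩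
      have := hb.mul_sub_le hε (by linarith) hTc
        (fun i hi => (hsplit i hi).imp And.right And.right) hmem hlow hhigh
      linarith
    · refine hF ⟨fun i => b i - c, fun i hi => ?_, hb.sub_const c⟩
      exact ((hsplit i hi).resolve_left fun h => hlow ⟨i, hi, h.2⟩).1
  · refine hF ⟨b, fun i hi => ?_, hb⟩
    exact ((hsplit i hi).resolve_right fun h => hhigh ⟨i, hi, h.2⟩).1

def subsetSums (c : ℕ → ℕ) : ℕ → Finset ℕ
  | 0 => {0}
  | n + 1 => subsetSums c n ∪ (subsetSums c n).image (· + c n)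

lemma le_sum_of_mem_subsetSums {c : ℕ → ℕ} {n m : ℕ} (hm : m ∈ subsetSums c n) :
    m ≤ ∑ j ∈ range n, c j := by
  induction n generalizing m with
  | zero => simp_all [subsetSums]
  | succ n ih =>
    rw [sum_range_succ]
    rcases mem_union.1 hm with hm | hm
    · exact (ih hm).trans (Nat.le_add_right _ _)
    · obtain ⟨x, hx, rfl⟩ := mem_image.1 hm
      exact Nat.add_le_add_right (ih hx) _

lemma card_subsetSums {c : ℕ → ℕ} (hc : ∀ n, ∑ j ∈ range n, c j < c n) (n : ℕ) :
    #(subsetSums c n) = 2 ^ n := by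
  induction n with
  | zero => rfl
  | succ n ih =>
    have hdisj : Disjoint (subsetSums c n) ((subsetSums c n).image (· + c n)) := by
      refine disjoint_left.2 fun m hm hm' => ?_
      obtain ⟨x, -, rfl⟩ := mem_image.1 hm'
      have := le_sum_of_mem_subsetSums hm
      have := hc n
      omega
    rw [subsetSums, card_union_of_disjoint hdisj,
      card_image_of_injective _ (add_left_injective _), ih, pow_succ, mul_two]

lemma not_containsKAP_subsetSums {c : ℕ → ℕ} (hε : 0 ≤ ε) (hα : 0 < k - 2 - 4 * ε)
    (hc : ∀ n, k * ∑ j ∈ range n, (c j : ℝ) < (k - 2 - 4 * ε) * c n) (n : ℕ) :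
    ¬ ContainsKAP ((Nat.cast : ℕ → ℝ) '' subsetSums c n) k ε := by
  induction n with
  | zero => simpa [subsetSums] using not_containsKAP_singleton hε (by linarith) 0
  | succ n ih =>
    have himage : ((Nat.cast : ℕ → ℝ) '' subsetSums c (n + 1)) =
        (Nat.cast '' subsetSums c n) ∪ (· + (c n : ℝ)) '' (Nat.cast '' subsetSums c n) := by
      simp [subsetSums, Set.image_union, Set.image_image]
    rw [himage]
    refine not_containsKAP_union_image_add hε hα (by positivity) ih ?_ (hc n)
    rintro _ ⟨m, hm, rfl⟩
    exact ⟨m.cast_nonneg, by exact_mod_cast le_sum_of_mem_subsetSums hm⟩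

lemma rk_le (k : ℕ) (ε : ℝ) (N : ℕ) : rk k ε N ≤ N :=
  csSup_le' fun _ ⟨A, hA, hAN, _⟩ => hA ▸ (card_le_card hAN).trans (by simp)

lemma card_le_rk {A : Finset ℕ} {N : ℕ} (hAN : A ⊆ Finset.Icc 1 N)
    (hA : ¬ ContainsKAP ((Nat.cast : ℕ → ℝ) '' A) k ε) : #A ≤ rk k ε N :=
  le_csSup ⟨N, fun _ ⟨B, hB, hBN, _⟩ => hB ▸ (card_le_card hBN).trans (by simp)⟩ ⟨A, rfl, hAN, hA⟩

lemma lt_of_mul_lt_sub_mul {S c : ℕ} (hε : 0 ≤ ε) (h : k * (S : ℝ) < (k - 2 - 4 * ε) * c) :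
    S < c := by
  by_contra! hle
  have : (c : ℝ) ≤ S := by exact_mod_cast hle
  nlinarith [Nat.cast_nonneg (α := ℝ) c, Nat.cast_nonneg (α := ℝ) k]

lemma two_pow_le_rk_of_forall_mul_sum_lt {c : ℕ → ℕ} (hε : 0 ≤ ε) (hα : 0 < k - 2 - 4 * ε)
    (hc : ∀ n, k * ∑ j ∈ range n, (c j : ℝ) < (k - 2 - 4 * ε) * c n) (n : ℕ) :
    2 ^ n ≤ rk k ε (∑ j ∈ range n, c j + 1) := by
  have hsum (n : ℕ) : ∑ j ∈ range n, c j < c n :=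
    lt_of_mul_lt_sub_mul (k := k) hε (by exact_mod_cast hc n)
  rw [← card_subsetSums hsum n, ← card_image_of_injective _ (add_left_injective 1)]
  refine card_le_rk (fun m hm => ?_) fun h => not_containsKAP_subsetSums hε hα hc n ?_
  · obtain ⟨x, hx, rfl⟩ := mem_image.1 hm
    simpa using le_sum_of_mem_subsetSums hx
  · refine ContainsKAP.of_image_add (t := 1) ?_
    simpa [Set.image_image] using h

lemma mul_sum_range_lt {a b : ℝ} {c : ℕ → ℝ} (h₀ : 0 < a * c 0)
    (hc : ∀ n, (a + b) * c n ≤ a * c (n + 1)) (n : ℕ) :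
    b * ∑ j ∈ range n, c j < a * c n := by
  induction n with
  | zero => simpa using h₀
  | succ n ih =>
    rw [sum_range_succ, mul_add]
    linarith [hc n]

lemma add_mul_ceil_le_mul_ceil {a b q C : ℝ} (ha : 0 < a) (hq : 1 ≤ q) (hC₀ : 0 ≤ C)
    (hC : a * q ≤ (a * q - a - b) * C) (n : ℕ) :
    (a + b) * ⌈C * q ^ n⌉₊ ≤ a * ⌈C * q ^ (n + 1)⌉₊ := by
  set x : ℝ := (⌈C * q ^ n⌉₊ : ℝ)
  have hqn : 1 ≤ q ^ n := one_le_pow₀ hq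
  have hx : x < C * q ^ n + 1 := Nat.ceil_lt_add_one (by positivity)
  have hCx : C ≤ x := (le_mul_of_one_le_right hC₀ hqn).trans (Nat.le_ceil _)
  have hpos : 0 < a * q - a - b := pos_of_mul_pos_left ((by positivity : 0 < a * q).trans_le hC) hC₀
  calc (a + b) * x ≤ a * q * (x - 1) := by nlinarith [mul_le_mul_of_nonneg_left hCx hpos.le]
    _ ≤ a * q * (C * q ^ n) := by gcongr; linarith
    _ = a * (C * q ^ (n + 1)) := by ring
    _ ≤ a * ⌈C * q ^ (n + 1)⌉₊ := by gcongr; exact Nat.le_ceil _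

lemma exists_two_pow_le_rk {q : ℝ} (hε : 0 ≤ ε) (hα : 0 < k - 2 - 4 * ε)
    (hq : 2 * k - 2 - 4 * ε < (k - 2 - 4 * ε) * q) :
    ∃ B : ℝ, ∃ N : ℕ → ℕ, ∀ n, 2 ^ n ≤ rk k ε (N n) ∧ (N n : ℝ) ≤ B * q ^ n := by
  set a : ℝ := k - 2 - 4 * ε
  have hq₁ : 1 ≤ q := by nlinarith
  have hden : 0 < a * q - a - k := by linarith
  set C := a * q / (a * q - a - k)
  have hC : 0 < C := by positivity
  set c : ℕ → ℕ := fun j => ⌈C * q ^ j⌉₊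
  have hc : ∀ n, k * ∑ j ∈ range n, (c j : ℝ) < a * c n := by
    refine mul_sum_range_lt (mul_pos hα (by simpa [c] using hC))
      (add_mul_ceil_le_mul_ceil hα hq₁ hC.le ?_)
    rw [mul_div_cancel₀ _ hden.ne']
  refine ⟨C + 1, fun n => ∑ j ∈ range n, c j + 1, fun n =>
    ⟨two_pow_le_rk_of_forall_mul_sum_lt hε hα hc n, ?_⟩⟩
  have hqn : 1 ≤ q ^ n := one_le_pow₀ hq₁
  have hcn : (c n : ℝ) < C * q ^ n + 1 := Nat.ceil_lt_add_one (by positivity)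
  have hlt : ∑ j ∈ range n, c j < c n := lt_of_mul_lt_sub_mul (k := k) hε (by push_cast; exact hc n)
  calc ((∑ j ∈ range n, c j + 1 : ℕ) : ℝ) ≤ c n := by exact_mod_cast hlt
    _ ≤ (C + 1) * q ^ n := by linarith

lemma frequently_le_log_div_log {r N : ℕ → ℕ} {B q y : ℝ} (hr : ∀ M, r M ≤ M)
    (hrN : ∀ n, 2 ^ n ≤ r (N n)) (hN : ∀ n, (N n : ℝ) ≤ B * q ^ n) (hq : 1 < q) (hy : 0 ≤ y)
    (hyq : y < log 2 / log q) :
    ∃ᶠ M in atTop, y ≤ log (r M) / log M := by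
  have hNtop : Tendsto N atTop atTop :=
    tendsto_atTop_mono (fun n => Nat.lt_two_pow_self.le.trans ((hrN n).trans (hr _))) tendsto_id
  have hgap : 0 < log 2 - y * log q := by
    rw [lt_div_iff₀ (log_pos hq)] at hyq
    linarith
  refine hNtop.frequently (Eventually.frequently ?_)
  filter_upwards [hNtop.eventually_ge_atTop 2, tendsto_natCast_atTop_atTop.eventually_ge_atTop
    (y * log B / (log 2 - y * log q))] with n hN₂ hn
  have hN₂' : (2 : ℝ) ≤ N n := by exact_mod_cast hN₂
  have hB : 0 < B := pos_of_mul_pos_left (by linarith [hN n]) (by positivity : (0 : ℝ) ≤ q ^ n)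
  rw [div_le_iff₀ hgap] at hn
  rw [le_div_iff₀ (log_pos (by linarith))]
  calc y * log (N n) ≤ y * (log B + n * log q) := by
        rw [← log_pow, ← log_mul hB.ne' (by positivity)]
        gcongr
        exact hN n
    _ ≤ n * log 2 := by linarith
    _ = log (2 ^ n : ℕ) := by push_cast; rw [log_pow]
    _ ≤ log (r (N n)) := by gcongr; exact hrN n

lemma log_rk_div_log_le_one (k : ℕ) (ε : ℝ) (N : ℕ) : log (rk k ε N) / log N ≤ 1 := by
  refine div_le_one_of_le₀ ?_ (log_natCast_nonneg N)
  rcases (rk k ε N).eq_zero_or_pos with h | h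
  · simpa [h] using log_natCast_nonneg N
  · exact log_le_log (by exact_mod_cast h) (by exact_mod_cast rk_le k ε N)

theorem stmt_14_general (k : ℕ) (ε : ℝ) (hε1 : 0 < ε)
    (hε3 : ε < ((k : ℝ) - 2) / 4) :
    Filter.limsup (fun N : ℕ => Real.log (rk k ε N) / Real.log N) Filter.atTop ≥
      Real.log 2 / Real.log ((2 * (k : ℝ) - 2 - 4 * ε) / ((k : ℝ) - 2 - 4 * ε)) := by
  have hα : 0 < (k : ℝ) - 2 - 4 * ε := by linarith
  set D := (2 * (k : ℝ) - 2 - 4 * ε) / ((k : ℝ) - 2 - 4 * ε) with hD_def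
  have hD : 1 < D := by rw [hD_def, one_lt_div hα]; linarith
  refine le_of_forall_lt_imp_le_of_dense fun x hx => (le_max_left x 0).trans ?_
  have hy : max x 0 < log 2 / log D := max_lt hx (div_pos (log_pos one_lt_two) (log_pos hD))
  obtain ⟨q, hyq, hDq⟩ : ∃ q, max x 0 < log 2 / log q ∧ D < q :=
    ((((continuousAt_const.div (continuousAt_log (by positivity)) (log_pos hD).ne').eventually
      (lt_mem_nhds hy)).filter_mono nhdsWithin_le_nhds).and
        (self_mem_nhdsWithin (s := Set.Ioi D))).exists
  obtain ⟨B, N, hN⟩ := exists_two_pow_le_rk hε1.le hα (by rwa [hD_def, div_lt_iff₀' hα] at hDq)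
  exact le_limsup_of_frequently_le (frequently_le_log_div_log (rk_le k ε) (fun n => (hN n).1)
    (fun n => (hN n).2) (hD.trans hDq) (le_max_right x 0) hyq)
    (isBoundedUnder_of ⟨1, log_rk_div_log_le_one k ε⟩)

theorem stmt_14 (k : ℕ) (hk : 3 ≤ k) (ε : ℝ) (hε1 : 0 < ε) (hε2 : ε < 1)
    (hε3 : ε < ((k : ℝ) - 2) / 4) :
    Filter.limsup (fun N : ℕ => Real.log (rk k ε N) / Real.log N) Filter.atTop ≥
      Real.log 2 / Real.log ((2 * (k : ℝ) - 2 - 4 * ε) / ((k : ℝ) - 2 - 4 * ε)) :=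
  stmt_14_general k ε hε1 hε3
end
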